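/- arXiv:1502.01405 — 8 statements merged into one kernel-verified Lean document; each statement's English description precedes it below -/
import Mathlib

section
/- Let G be a finite simple graph with vertex set V, let F ⊆ V be a subset ('face'), and suppose φ : V → F is a map satisfying: (1) φ(v) = v for all v ∈ F; (2) if v and v' are adjacent then φ(v) = φ(v') or φ(v) is adjacent to φ(v'); (3) if v ∈ F, v' ∉ F and v is adjacent to v', then φ(v') = v. Then for any vertices v, v'' ∉ F × F with v adjacent to some v'' ∈ F, and any v' ∈ F, there exists a geodesic (shortest path) in G from v to v' whose first step is the edge from v to v''. -/
private lemma aux_dist_phi {V : Type*} (G : SimpleGraph V)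
    (hconn : G.Connected) (F : Set V) (φ : V → V)
    (hadj : ∀ v v', G.Adj v v' → φ v = φ v' ∨ G.Adj (φ v) (φ v'))
    (hstep : ∀ v v', v ∈ F → v' ∉ F → G.Adj v v' → φ v' = v)
    :
    ∀ (a b : V) (p : G.Walk a b), a ∉ F → b ∈ F → G.dist (φ a) b + 1 ≤ p.length := by
  intro a b p
  induction p with
  | nil => intro ha hv'; exact absurd hv' ha
  | @cons a c v' hac p ih =>
    intro ha hv' 
    by_cases hc : c ∈ F
    · have hφa : φ a = c := hstep c a hc ha hac.symm
      have : G.dist c v' ≤ p.length := SimpleGraph.dist_le p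
      simp only [SimpleGraph.Walk.length_cons, hφa]
      omega
    · have h1 : G.dist (φ c) v' + 1 ≤ p.length := ih hc hv'
      have h2 : G.dist (φ a) (φ c) ≤ 1 := by
        rcases hadj a c hac with h | h
        · rw [h, SimpleGraph.dist_self]; omega
        · calc G.dist (φ a) (φ c) ≤ (SimpleGraph.Walk.cons h SimpleGraph.Walk.nil).length :=
                SimpleGraph.dist_le _
            _ = 1 := rfl
      have h3 : G.dist (φ a) v' ≤ G.dist (φ a) (φ c) + G.dist (φ c) v' :=
        hconn.dist_triangle
      simp only [SimpleGraph.Walk.length_cons]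
      omega

/-- If `φ` is a normalization map for a set `F` of vertices of a connected finite graph `G`,
and `v ∉ F` is adjacent to `v'' ∈ F`, then for any `v' ∈ F` there is a geodesic from `v`
to `v'` whose first step is the edge `v → v''`. -/
theorem geodesic_first_step_into_face {V : Type*} [Fintype V] (G : SimpleGraph V)
    (hconn : G.Connected) (F : Set V) (φ : V → V)
    (hrange : ∀ v, φ v ∈ F)
    (hfix : ∀ v ∈ F, φ v = v)
    (hadj : ∀ v v', G.Adj v v' → φ v = φ v' ∨ G.Adj (φ v) (φ v'))
    (hstep : ∀ v v', v ∈ F → v' ∉ F → G.Adj v v' → φ v' = v)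
    (v v'' v' : V) (hv : v ∉ F) (hv'' : v'' ∈ F) (hv' : v' ∈ F)
    (hvv'' : G.Adj v v'') :
    ∃ q : G.Walk v'' v', (SimpleGraph.Walk.cons hvv'' q).length = G.dist v v' := by
  have hφv : φ v = v'' := hstep v'' v hv'' hv hvv''.symm
  obtain ⟨p, hp⟩ := hconn.exists_walk_length_eq_dist v v'
  have hlow : G.dist v'' v' + 1 ≤ G.dist v v' := by
    have := aux_dist_phi G hconn F φ hadj hstep v v' p hv hv'
    rw [hφv] at this; omega
  obtain ⟨q, hq⟩ := hconn.exists_walk_length_eq_dist v'' v'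
  refine ⟨q, ?_⟩
  have hup : G.dist v v' ≤ G.dist v'' v' + 1 := by
    calc G.dist v v' ≤ (SimpleGraph.Walk.cons hvv'' q).length := SimpleGraph.dist_le _
      _ = q.length + 1 := by simp [SimpleGraph.Walk.length_cons]
      _ = G.dist v'' v' + 1 := by rw [hq]
  simp only [SimpleGraph.Walk.length_cons, hq]
  omega
end

section
/- Let G be a finite simple graph with vertex set V and F ⊆ V a subset, and suppose φ : V → F is a normalization map for F, i.e.: (1) φ(v) = v for all v ∈ F; (2) if v and v' are adjacent then φ(v) = φ(v') or φ(v) is adjacent to φ(v'); (3) if v ∈ F, v' ∉ F and v is adjacent to v', then φ(v') = v. Then for any two vertices v, v' ∈ F, every geodesic in G from v to v' stays entirely inside F. -/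
private lemma exists_phi_walk {V : Type*} (G : SimpleGraph V) (φ : V → V)
    (hadj : ∀ v v', G.Adj v v' → φ v = φ v' ∨ G.Adj (φ v) (φ v')) :
    ∀ {a b : V} (p : G.Walk a b), ∃ q : G.Walk (φ a) (φ b), q.length ≤ p.length := by
  intro a b p
  induction p with
  | nil => exact ⟨.nil, le_rfl⟩
  | cons h p ih =>
    obtain ⟨q, hq⟩ := ih
    rcases hadj _ _ h with he | ha
    · exact ⟨q.copy he.symm rfl, by simpa using hq.trans (Nat.le_succ _)⟩
    · exact ⟨.cons ha q, by simpa using hq⟩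

/-- If `φ` is a normalization map for a set `F` of vertices of a finite graph `G`, then
every geodesic between two vertices of `F` stays inside `F`. -/
theorem geodesic_stays_in_face {V : Type*} [Fintype V] (G : SimpleGraph V)
    (F : Set V) (φ : V → V)
    (hrange : ∀ v, φ v ∈ F)
    (hfix : ∀ v ∈ F, φ v = v)
    (hadj : ∀ v v', G.Adj v v' → φ v = φ v' ∨ G.Adj (φ v) (φ v'))
    (hstep : ∀ v v', v ∈ F → v' ∉ F → G.Adj v v' → φ v' = v)
    (v v' : V) (hv : v ∈ F) (hv' : v' ∈ F)
    (p : G.Walk v v') (hp : p.length = G.dist v v') :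
    ∀ x ∈ p.support, x ∈ F := by
  induction p with
  | nil => intro x hx; simp at hx; subst hx; exact hv
  | @cons a w b h p ih =>
    intro x hx
    by_cases hw : w ∈ F
    · have hwd : p.length = G.dist w b := by
        have h1 : G.dist w b ≤ p.length := SimpleGraph.dist_le p
        rcases h1.lt_or_eq with hlt | heq
        · exfalso
          obtain ⟨q, hq⟩ := (p.reachable).exists_walk_length_eq_dist
          have h2 : G.dist a b ≤ (SimpleGraph.Walk.cons h q).length := SimpleGraph.dist_le _
          simp only [SimpleGraph.Walk.length_cons] at h2 hp
          omega
        · exact heq.symm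
      rcases List.mem_cons.mp (by simpa using hx) with rfl | hx'
      · exact hv
      · exact ih hw hv' hwd x hx'
    · exfalso
      have hφw : φ w = a := hstep a w hv hw h
      obtain ⟨q, hq⟩ := exists_phi_walk G φ hadj p
      have h2 : G.dist a b ≤ (q.copy hφw (hfix b hv')).length := SimpleGraph.dist_le _
      rw [SimpleGraph.Walk.length_copy] at h2
      simp only [SimpleGraph.Walk.length_cons] at hp
      omega
end

section
/- Let (W,S) be a finite Coxeter system, J ⊆ S, and for w ∈ W let w_J denote the parabolic component of the factorization w = w_J · w^J with w_J ∈ W_J, ℓ(w) = ℓ(w_J) + ℓ(w^J), and w^J of minimal length in W_J w^J. If u ≤ v in the right weak order on W (i.e. ℓ(u) + ℓ(u⁻¹v) = ℓ(v)), then u_J ≤ v_J in the weak order on W_J. -/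
/-- The parabolic factorization of `w` with respect to `J ⊆ S`: `w = a * b` with
`a ∈ W_J`, `b` of minimal length in `W_J b`, and `ℓ(w) = ℓ(a) + ℓ(b)`. -/
def IsParabolicFactorization {B : Type*} {W : Type*} [Group W] {M : CoxeterMatrix B}
    (cs : CoxeterSystem M W) (J : Set B) (w a b : W) : Prop :=
  a ∈ Subgroup.closure (cs.simple '' J) ∧
  (∀ i ∈ J, cs.length (cs.simple i * b) > cs.length b) ∧
  w = a * b ∧
  cs.length w = cs.length a + cs.length b


open List

namespace ParabolicProof

attribute [local instance] Classical.propDecidable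

variable {B : Type*} {W : Type*} [Group W] {M : CoxeterMatrix B} (cs : CoxeterSystem M W)

local prefix:100 "σ" => cs.simple
local prefix:100 "π" => cs.wordProd
local prefix:100 "ℓ" => cs.length

/-- The basic involution of `W × ℤˣ` attached to a simple reflection. -/
noncomputable def permAux (i : B) : (W × ℤˣ) → (W × ℤˣ) :=
  fun p => (σ i * p.1 * σ i, if p.1 = σ i then -p.2 else p.2)

lemma permAux_involutive (i : B) : Function.Involutive (permAux cs i) := by
  rintro ⟨t, z⟩
  simp only [permAux, Prod.mk.injEq]
  constructor
  · calc σ i * (σ i * t * σ i) * σ i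
        = (σ i * σ i) * t * (σ i * σ i) := by group
      _ = t := by rw [cs.simple_mul_simple_self]; group
  · by_cases h : t = σ i
    · subst h
      simp [cs.simple_mul_simple_self]
    · have h2 : ¬ (σ i * t * σ i = σ i) := by
        intro hc
        apply h
        calc t = (σ i * σ i) * t * (σ i * σ i) := by rw [cs.simple_mul_simple_self]; group
          _ = σ i * (σ i * t * σ i) * σ i := by group
          _ = σ i * σ i * σ i := by rw [hc]
          _ = σ i := by rw [cs.simple_mul_simple_self]; group
      simp [h, h2]

/-- The permutation of `W × ℤˣ` attached to a simple reflection. -/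
noncomputable def refPerm (i : B) : Equiv.Perm (W × ℤˣ) := (permAux_involutive cs i).toPerm

lemma refPerm_apply (i : B) (t : W) (z : ℤˣ) :
    refPerm cs i (t, z) = (σ i * t * σ i, if t = σ i then -z else z) := rfl

lemma rightInvSeq_cons (i : B) (ω : List B) :
    cs.rightInvSeq (i :: ω) = ((π ω)⁻¹ * σ i * π ω) :: cs.rightInvSeq ω := rfl

lemma prod_refPerm (ω : List B) (t : W) (z : ℤˣ) :
    (ω.map (refPerm cs)).prod (t, z) =
      (π ω * t * (π ω)⁻¹, (-1 : ℤˣ) ^ ((cs.rightInvSeq ω).count t) * z) := by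
  induction ω with
  | nil => simp [CoxeterSystem.wordProd_nil]
  | cons i ω ih =>
    rw [map_cons, prod_cons, Equiv.Perm.mul_apply, ih, refPerm_apply,
      rightInvSeq_cons, CoxeterSystem.wordProd_cons]
    have key : π ω * t * (π ω)⁻¹ = σ i ↔ t = (π ω)⁻¹ * σ i * π ω := by
      constructor
      · intro h; rw [← h]; group
      · intro h; rw [h]; group
    simp only [Prod.mk.injEq]
    constructor
    · rw [mul_inv_rev, cs.inv_simple]; group
    · rw [List.count_cons]
      by_cases h : t = (π ω)⁻¹ * σ i * π ω
      · rw [if_pos (key.mpr h)]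
        have : ((π ω)⁻¹ * σ i * π ω == t) = true := beq_iff_eq.mpr h.symm
        rw [this]
        simp only [if_true]
        rw [pow_succ, mul_neg_one, neg_mul]
      · rw [if_neg (fun hc => h (key.mp hc))]
        have : ((π ω)⁻¹ * σ i * π ω == t) = false := beq_eq_false_iff_ne.mpr (fun hc => h hc.symm)
        rw [this]
        simp

end ParabolicProof

namespace ParabolicProof

attribute [local instance] Classical.propDecidable

variable {B : Type*} {W : Type*} [Group W] {M : CoxeterMatrix B} (cs : CoxeterSystem M W)

local prefix:100 "σ" => cs.simple
local prefix:100 "π" => cs.wordProd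
local prefix:100 "ℓ" => cs.length

/-- The word `[i, j, i, j, ...]` of length `2 * m`. -/
def altW (i j : B) : ℕ → List B
  | 0 => []
  | m + 1 => i :: j :: altW i j m

lemma wordProd_altW (i j : B) (m : ℕ) : π (altW i j m) = (σ i * σ j) ^ m := by
  induction m with
  | zero => simp [altW, CoxeterSystem.wordProd_nil]
  | succ m ih =>
    rw [altW, CoxeterSystem.wordProd_cons, CoxeterSystem.wordProd_cons, ih, pow_succ']
    group

section AbstractDihedral

variable {G : Type*} [Group G]

lemma dih_swap {x b : G} (hbx : b * x = x⁻¹ * b) : ∀ r : ℕ, b * x ^ r = (x ^ r)⁻¹ * b := by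
  intro r
  induction r with
  | zero => simp
  | succ r ih =>
    rw [pow_succ, ← mul_assoc, ih, mul_assoc, hbx, mul_inv_rev]
    group

lemma dih_e1 {x b : G} (hb : b * b = 1) (hbx : b * x = x⁻¹ * b) (m : ℕ) :
    (b * x ^ m)⁻¹ * (x * b) * (b * x ^ m) = (x ^ (2 * m + 1))⁻¹ * b := by
  have hbinv : b⁻¹ = b := inv_eq_of_mul_eq_one_right hb
  calc (b * x ^ m)⁻¹ * (x * b) * (b * x ^ m)
      = (x ^ m)⁻¹ * b * x * ((b * b) * x ^ m) := by rw [mul_inv_rev, hbinv]; group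
    _ = (x ^ m)⁻¹ * (b * x) * x ^ m := by rw [hb]; group
    _ = (x ^ m)⁻¹ * (x⁻¹ * b) * x ^ m := by rw [hbx]
    _ = (x ^ m)⁻¹ * x⁻¹ * (b * x ^ m) := by group
    _ = (x ^ m)⁻¹ * x⁻¹ * ((x ^ m)⁻¹ * b) := by rw [dih_swap hbx]
    _ = (x ^ (2 * m + 1))⁻¹ * b := by
        rw [show 2 * m + 1 = (m + 1) + m by ring, pow_add, pow_succ, mul_inv_rev, mul_inv_rev]
        group

lemma dih_e2 {x b : G} (hbx : b * x = x⁻¹ * b) (m : ℕ) :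
    (x ^ m)⁻¹ * b * x ^ m = (x ^ (2 * m))⁻¹ * b := by
  rw [mul_assoc, dih_swap hbx, two_mul, pow_add, mul_inv_rev]
  group

end AbstractDihedral

lemma simple_swap (i j : B) : σ j * (σ i * σ j) = (σ i * σ j)⁻¹ * σ j := by
  rw [mul_inv_rev, cs.inv_simple, cs.inv_simple, mul_assoc]

lemma ris_altW (i j : B) (m : ℕ) :
    cs.rightInvSeq (altW i j m) =
      ((range (2 * m)).reverse).map (fun r => (((σ i * σ j) ^ r)⁻¹ * σ j)) := by
  induction m with
  | zero => simp [altW]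
  | succ m ih =>
    have h2 : 2 * (m + 1) = (2 * m + 1) + 1 := by ring
    rw [h2, range_succ, range_succ]
    rw [altW, rightInvSeq_cons, rightInvSeq_cons, ih, CoxeterSystem.wordProd_cons,
      wordProd_altW]
    simp only [reverse_append, reverse_cons, reverse_nil, nil_append, cons_append, map_cons]
    have hσi : σ i = (σ i * σ j) * σ j := by
      rw [mul_assoc, cs.simple_mul_simple_self]; group
    have hbx : σ j * (σ i * σ j) = (σ i * σ j)⁻¹ * σ j := simple_swap cs i j
    have hb : σ j * σ j = 1 := cs.simple_mul_simple_self j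
    congr 1
    · -- e1
      calc (σ j * (σ i * σ j) ^ m)⁻¹ * σ i * (σ j * (σ i * σ j) ^ m)
          = (σ j * (σ i * σ j) ^ m)⁻¹ * ((σ i * σ j) * σ j) * (σ j * (σ i * σ j) ^ m) := by
            rw [← hσi]
        _ = ((σ i * σ j) ^ (2 * m + 1))⁻¹ * σ j := dih_e1 hb hbx m
    congr 1
    · exact dih_e2 hbx m

lemma count_ris_altW_even (i j : B) (t : W) :
    Even ((cs.rightInvSeq (altW i j (M i j))).count t) := by
  rw [ris_altW, map_reverse, count_reverse]
  set m := M i j with hm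
  have hx : (σ i * σ j) ^ m = 1 := cs.simple_mul_simple_pow i j
  have : ∀ r : ℕ, ((σ i * σ j) ^ (m + r))⁻¹ * σ j = ((σ i * σ j) ^ r)⁻¹ * σ j := by
    intro r
    rw [pow_add, hx, one_mul]
  rw [two_mul, range_add, map_append, count_append, map_map]
  have hmap : (range m).map ((fun r => ((σ i * σ j) ^ r)⁻¹ * σ j) ∘ (fun r => m + r)) =
      (range m).map (fun r => ((σ i * σ j) ^ r)⁻¹ * σ j) := by
    apply map_congr_left
    intro r _
    exact this r
  rw [hmap]
  exact ⟨_, rfl⟩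

lemma refPerm_liftable : M.IsLiftable (refPerm cs) := by
  intro i j
  have key : ∀ m : ℕ, (refPerm cs i * refPerm cs j) ^ m = ((altW i j m).map (refPerm cs)).prod := by
    intro m
    induction m with
    | zero => simp [altW]
    | succ m ih =>
      rw [pow_succ', altW, map_cons, map_cons, prod_cons, prod_cons, ih, mul_assoc]
  rw [key]
  apply Equiv.ext
  rintro ⟨t, z⟩
  rw [prod_refPerm, wordProd_altW, cs.simple_mul_simple_pow i j]
  obtain ⟨k, hk⟩ := count_ris_altW_even cs i j t
  rw [hk]
  simp [pow_add]

/-- The sign representation used to prove the strong exchange property. -/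
noncomputable def sgnRep : W →* Equiv.Perm (W × ℤˣ) := cs.lift ⟨refPerm cs, refPerm_liftable cs⟩

lemma sgnRep_simple (i : B) : sgnRep cs (σ i) = refPerm cs i :=
  cs.lift_apply_simple (refPerm_liftable cs) i

lemma sgnRep_wordProd (ω : List B) : sgnRep cs (π ω) = (ω.map (refPerm cs)).prod := by
  unfold CoxeterSystem.wordProd
  rw [MonoidHom.map_list_prod, map_map]
  congr 1
  apply map_congr_left
  intro i _
  exact sgnRep_simple cs i

end ParabolicProof

namespace ParabolicProof

attribute [local instance] Classical.propDecidable

variable {B : Type*} {W : Type*} [Group W] {M : CoxeterMatrix B} (cs : CoxeterSystem M W)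

local prefix:100 "σ" => cs.simple
local prefix:100 "π" => cs.wordProd
local prefix:100 "ℓ" => cs.length

/-- The sign of `t` relative to `w`. -/
noncomputable def eta (w t : W) : ℤˣ := ((sgnRep cs w) (t, 1)).2

lemma eta_eq_count (ω : List B) (t : W) :
    eta cs (π ω) t = (-1 : ℤˣ) ^ ((cs.rightInvSeq ω).count t) := by
  simp [eta, sgnRep_wordProd, prod_refPerm]

lemma sgnRep_apply (w t : W) (z : ℤˣ) :
    (sgnRep cs w) (t, z) = (w * t * w⁻¹, eta cs w t * z) := by
  obtain ⟨ω, hω, rfl⟩ := cs.exists_reduced_word' w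
  rw [sgnRep_wordProd, prod_refPerm, eta_eq_count]

lemma sgnRep_refl_self {t : W} (ht : cs.IsReflection t) (z : ℤˣ) :
    (sgnRep cs t) (t, z) = (t, -z) := by
  obtain ⟨u, i, rfl⟩ := ht
  set t := u * σ i * u⁻¹ with htdef
  have hconj : u⁻¹ * t * u⁻¹⁻¹ = σ i := by rw [htdef]; group
  set ε := eta cs u⁻¹ t with hε
  have step1 : ∀ y : ℤˣ, (sgnRep cs u⁻¹) (t, y) = (σ i, ε * y) := by
    intro y
    rw [sgnRep_apply, hconj]
  have hεε : ε * ε = 1 := Int.units_mul_self ε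
  have step3 : ∀ y : ℤˣ, (sgnRep cs u) (σ i, y) = (t, ε * y) := by
    intro y
    have h1 : (sgnRep cs u) ((sgnRep cs u⁻¹) (t, 1)) = (t, 1) := by
      rw [← Equiv.Perm.mul_apply, ← map_mul, mul_inv_cancel, map_one, Equiv.Perm.one_apply]
    rw [step1 1, mul_one] at h1
    rw [sgnRep_apply] at h1 ⊢
    have h2 : eta cs u (σ i) * ε = 1 := congrArg Prod.snd h1
    have h3 : eta cs u (σ i) = ε := by
      calc eta cs u (σ i) = eta cs u (σ i) * (ε * ε) := by rw [hεε, mul_one]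
        _ = (eta cs u (σ i) * ε) * ε := by rw [mul_assoc]
        _ = ε := by rw [h2, one_mul]
    rw [h3]
  calc (sgnRep cs t) (t, z)
      = (sgnRep cs u) ((sgnRep cs (σ i)) ((sgnRep cs u⁻¹) (t, z))) := by
        rw [htdef]
        rw [map_mul, map_mul]
        rfl
    _ = (sgnRep cs u) ((refPerm cs i) (σ i, ε * z)) := by rw [step1, sgnRep_simple]
    _ = (sgnRep cs u) (σ i, -(ε * z)) := by rw [refPerm_apply, if_pos rfl, cs.simple_mul_simple_self, one_mul]
    _ = (t, -z) := by
        rw [step3]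
        congr 1
        calc ε * -(ε * z) = -(ε * (ε * z)) := by rw [mul_neg]
          _ = -((ε * ε) * z) := by rw [mul_assoc]
          _ = -z := by rw [hεε, one_mul]

lemma eta_mul_refl (w : W) {t : W} (ht : cs.IsReflection t) :
    eta cs (w * t) t = - eta cs w t := by
  show ((sgnRep cs (w * t)) (t, 1)).2 = - eta cs w t
  rw [map_mul, Equiv.Perm.mul_apply, sgnRep_refl_self cs ht, sgnRep_apply]
  simp

lemma rightInversion_of_eta_neg {w t : W} (ht : cs.IsReflection t) (h : eta cs w t = -1) :
    cs.IsRightInversion w t := by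
  obtain ⟨ω, hω, rfl⟩ := cs.exists_reduced_word' w
  rw [eta_eq_count] at h
  have hc : (cs.rightInvSeq ω).count t ≠ 0 := by
    intro h0
    rw [h0, pow_zero] at h
    exact absurd h (by decide)
  exact cs.isRightInversion_of_mem_rightInvSeq hω (List.count_pos_iff.mp (Nat.pos_of_ne_zero hc))

lemma eta_neg_of_rightInversion {w t : W} (ht : cs.IsRightInversion w t) :
    eta cs w t = -1 := by
  rcases Int.units_eq_one_or (eta cs w t) with h | h
  · exfalso
    have h2 : eta cs (w * t) t = -1 := by rw [eta_mul_refl cs w ht.1, h]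
    have h3 := rightInversion_of_eta_neg cs ht.1 h2
    have h4 : w * t * t = w := by rw [mul_assoc, ht.1.mul_self, mul_one]
    rw [CoxeterSystem.IsRightInversion, h4] at h3
    exact absurd ht.2 (by omega)
  · exact h

/-- The strong exchange property, right version. -/
theorem right_exchange {t : W} {ω : List B} (hω : cs.IsReduced ω)
    (ht : cs.IsRightInversion (π ω) t) :
    ∃ j < ω.length, π ω * t = π (ω.eraseIdx j) := by
  have h := eta_neg_of_rightInversion cs ht
  rw [eta_eq_count] at h
  have hc : (cs.rightInvSeq ω).count t ≠ 0 := by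
    intro h0
    rw [h0, pow_zero] at h
    exact absurd h (by decide)
  have hmem : t ∈ cs.rightInvSeq ω := List.count_pos_iff.mp (Nat.pos_of_ne_zero hc)
  obtain ⟨j, hj, hjt⟩ := List.mem_iff_getElem.mp hmem
  rw [cs.length_rightInvSeq] at hj
  refine ⟨j, hj, ?_⟩
  have := cs.wordProd_mul_getD_rightInvSeq ω j
  rwa [List.getD_eq_getElem _ _ (by rwa [cs.length_rightInvSeq]), hjt] at this

lemma reverse_eraseIdx {α : Type*} (l : List α) (j : ℕ) (hj : j < l.length) :
    (l.reverse.eraseIdx j).reverse = l.eraseIdx (l.length - 1 - j) := by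
  rw [List.eraseIdx_eq_take_drop_succ, List.take_reverse, List.drop_reverse,
    List.reverse_append, List.reverse_reverse, List.reverse_reverse,
    List.eraseIdx_eq_take_drop_succ]
  congr 2
  · omega
  · omega

/-- The strong exchange property, left version. -/
theorem left_exchange {t : W} {ω : List B} (hω : cs.IsReduced ω)
    (ht : cs.IsLeftInversion (π ω) t) :
    ∃ j < ω.length, t * π ω = π (ω.eraseIdx j) := by
  have hr : cs.IsRightInversion (π ω.reverse) t := by
    rw [cs.wordProd_reverse]
    exact cs.isRightInversion_inv_iff.mpr ht
  obtain ⟨j, hj, hjeq⟩ := right_exchange cs ((cs.isReduced_reverse_iff ω).mpr hω) hr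
  rw [List.length_reverse] at hj
  refine ⟨ω.length - 1 - j, by omega, ?_⟩
  have := congrArg (·⁻¹) hjeq
  simp only [mul_inv_rev, cs.wordProd_reverse, inv_inv, ht.1.inv] at this
  rw [← cs.wordProd_reverse (ω.reverse.eraseIdx j)] at this
  rwa [reverse_eraseIdx ω j (by omega)] at this

end ParabolicProof

namespace ParabolicProof

variable {B : Type*} {W : Type*} [Group W] {M : CoxeterMatrix B} (cs : CoxeterSystem M W)

local prefix:100 "σ" => cs.simple
local prefix:100 "π" => cs.wordProd
local prefix:100 "ℓ" => cs.length

/-- The deletion property. -/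
lemma deletion {ω : List B} (h : ¬ cs.IsReduced ω) :
    ∃ ω' : List B, ω'.length + 2 = ω.length ∧ π ω' = π ω ∧ ∀ i ∈ ω', i ∈ ω := by
  have hex : ∃ k, ¬ cs.IsReduced (ω.take (k + 1)) :=
    ⟨ω.length - 1, by
      rcases Nat.eq_zero_or_pos ω.length with h0 | h0
      · rw [List.eq_nil_of_length_eq_zero h0] at h ⊢
        simpa using h
      · rwa [List.take_of_length_le (by omega)]⟩
  classical
  set k := Nat.find hex with hk
  have hk1 : ¬ cs.IsReduced (ω.take (k + 1)) := Nat.find_spec hex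
  have hk0 : cs.IsReduced (ω.take k) := by
    rcases Nat.eq_zero_or_pos k with h0 | h0
    · rw [h0]
      simp [CoxeterSystem.IsReduced]
    · have hmin := Nat.find_min hex (show k - 1 < k by omega)
      rw [show k - 1 + 1 = k by omega] at hmin
      exact not_not.mp hmin
  have hklen : k < ω.length := by
    by_contra hge
    push_neg at hge
    exact h (by rwa [List.take_of_length_le (by omega)] at hk0)
  set c := ω[k] with hc
  have htake : ω.take (k + 1) = ω.take k ++ [c] := by
    rw [List.take_succ, List.getElem?_eq_getElem hklen]
    rfl
  have hlen_take : (ω.take k).length = k := by rw [List.length_take]; omega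
  have hπk : ℓ (π (ω.take k)) = k := by rw [hk0, hlen_take]
  have hdesc : cs.IsRightInversion (π (ω.take k)) (σ c) := by
    constructor
    · exact cs.isReflection_simple c
    · rcases cs.length_mul_simple (π (ω.take k)) c with h1 | h1
      · exfalso
        apply hk1
        rw [CoxeterSystem.IsReduced, htake, cs.wordProd_append, CoxeterSystem.wordProd_singleton,
          h1, hπk, List.length_append, List.length_singleton, hlen_take]
      · omega
  obtain ⟨l, hl, hleq⟩ := right_exchange cs hk0 hdesc
  refine ⟨(ω.take k).eraseIdx l ++ ω.drop (k + 1), ?_, ?_, ?_⟩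
  · have h1 : ((List.take k ω).eraseIdx l).length + 1 = k := by
      rw [List.length_eraseIdx_add_one (by omega), hlen_take]
    rw [List.length_append, List.length_drop]
    omega
  · rw [cs.wordProd_append, ← hleq]
    have : π ω = π (ω.take (k + 1)) * π (ω.drop (k + 1)) := by
      rw [← cs.wordProd_append, List.take_append_drop]
    rw [this, htake, cs.wordProd_append, CoxeterSystem.wordProd_singleton]
  · intro i hi
    rcases List.mem_append.mp hi with h1 | h1
    · exact List.mem_of_mem_take (List.mem_of_mem_eraseIdx h1)
    · exact List.mem_of_mem_drop h1

/-- Any word has a reduced subword-with-same-product whose letters come from the word. -/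
lemma exists_reduced_subword : ∀ n (ω : List B), ω.length ≤ n →
    ∃ ω' : List B, cs.IsReduced ω' ∧ (∀ i ∈ ω', i ∈ ω) ∧ π ω' = π ω := by
  intro n
  induction n with
  | zero =>
    intro ω hω
    rw [Nat.le_zero, List.length_eq_zero_iff] at hω
    exact ⟨[], by simp [CoxeterSystem.IsReduced], by simp, by rw [hω]⟩
  | succ n ih =>
    intro ω hω
    by_cases hred : cs.IsReduced ω
    · exact ⟨ω, hred, fun i hi => hi, rfl⟩
    · obtain ⟨ω₁, hlen, hprod, hmem⟩ := deletion cs hred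
      obtain ⟨ω', h1, h2, h3⟩ := ih ω₁ (by omega)
      exact ⟨ω', h1, fun i hi => hmem i (h2 i hi), by rw [h3, hprod]⟩

lemma wordProd_mem_closure {J : Set B} {ω : List B} (hω : ∀ i ∈ ω, i ∈ J) :
    π ω ∈ Subgroup.closure (cs.simple '' J) := by
  induction ω with
  | nil =>
    rw [cs.wordProd_nil]
    exact one_mem _
  | cons j ω ih =>
    rw [cs.wordProd_cons]
    exact mul_mem (Subgroup.subset_closure ⟨j, hω j (by simp), rfl⟩)
      (ih (fun i hi => hω i (by simp [hi])))

lemma exists_word_of_mem_closure {J : Set B} {a : W}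
    (ha : a ∈ Subgroup.closure (cs.simple '' J)) :
    ∃ ω : List B, (∀ i ∈ ω, i ∈ J) ∧ π ω = a := by
  induction ha using Subgroup.closure_induction with
  | mem x hx =>
    obtain ⟨i, hi, rfl⟩ := hx
    exact ⟨[i], by simpa using hi, cs.wordProd_singleton i⟩
  | one => exact ⟨[], by simp, cs.wordProd_nil⟩
  | mul x y _ _ hx hy =>
    obtain ⟨ω₁, h1, h2⟩ := hx
    obtain ⟨ω₂, h3, h4⟩ := hy
    refine ⟨ω₁ ++ ω₂, ?_, by rw [cs.wordProd_append, h2, h4]⟩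
    intro i hi
    rcases List.mem_append.mp hi with h | h
    · exact h1 i h
    · exact h3 i h
  | inv x _ hx =>
    obtain ⟨ω, h1, h2⟩ := hx
    exact ⟨ω.reverse, fun i hi => h1 i (List.mem_reverse.mp hi),
      by rw [cs.wordProd_reverse, h2]⟩

lemma exists_reduced_word_over {J : Set B} {a : W}
    (ha : a ∈ Subgroup.closure (cs.simple '' J)) :
    ∃ ω : List B, cs.IsReduced ω ∧ (∀ i ∈ ω, i ∈ J) ∧ π ω = a := by
  obtain ⟨ω, h1, h2⟩ := exists_word_of_mem_closure cs ha
  obtain ⟨ω', h3, h4, h5⟩ := exists_reduced_subword cs ω.length ω le_rfl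
  exact ⟨ω', h3, fun i hi => h1 i (h4 i hi), by rw [h5, h2]⟩

/-- If `b` has minimal length in its coset `W_J b`, then lengths add. -/
lemma length_coset_min_mul {J : Set B} {b : W}
    (hb : ∀ a ∈ Subgroup.closure (cs.simple '' J), ℓ b ≤ ℓ (a * b)) :
    ∀ γ : List B, cs.IsReduced γ → (∀ i ∈ γ, i ∈ J) → ℓ (π γ * b) = γ.length + ℓ b := by
  intro γ
  induction γ with
  | nil => simp [CoxeterSystem.wordProd_nil]
  | cons j γ₁ ih =>
    intro hγ hγJ
    have hγ₁ : cs.IsReduced γ₁ := by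
      have := CoxeterSystem.IsReduced.drop hγ 1
      simpa using this
    have hγ₁J : ∀ i ∈ γ₁, i ∈ J := fun i hi => hγJ i (by simp [hi])
    have ihx : ℓ (π γ₁ * b) = γ₁.length + ℓ b := ih hγ₁ hγ₁J
    rw [cs.wordProd_cons, mul_assoc]
    set x := π γ₁ * b with hxdef
    -- it suffices to rule out the descent case
    rcases cs.length_simple_mul x j with hcase | hcase
    · rw [hcase, ihx, List.length_cons]; omega
    · exfalso
      obtain ⟨β, hβred, hβ⟩ := cs.exists_reduced_word' b
      have hβlen : β.length = ℓ b := by rw [CoxeterSystem.IsReduced, ← hβ] at hβred; omega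
      have hcat : cs.IsReduced (γ₁ ++ β) := by
        rw [CoxeterSystem.IsReduced, cs.wordProd_append, ← hβ, ← hxdef, ihx,
          List.length_append, hβlen]
      have hπcat : π (γ₁ ++ β) = x := by rw [cs.wordProd_append, ← hβ]
      have hinv : cs.IsLeftInversion (π (γ₁ ++ β)) (σ j) := by
        rw [hπcat]
        exact ⟨cs.isReflection_simple j, by omega⟩
      obtain ⟨kk, hkk, hkeq⟩ := left_exchange cs hcat hinv
      rw [hπcat] at hkeq
      by_cases hlt : kk < γ₁.length
      · rw [List.eraseIdx_append_of_lt_length hlt, cs.wordProd_append, ← hβ] at hkeq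
        have hcancel : σ j * π γ₁ = π (γ₁.eraseIdx kk) := by
          have := hkeq
          rw [hxdef, ← mul_assoc] at this
          exact mul_right_cancel this
        have hlen1 : ℓ (σ j * π γ₁) = γ₁.length + 1 := by
          have := hγ
          rw [CoxeterSystem.IsReduced, cs.wordProd_cons] at this
          simpa using this
        have hlen2 : ℓ (π (γ₁.eraseIdx kk)) ≤ γ₁.length - 1 := by
          calc ℓ (π (γ₁.eraseIdx kk)) ≤ (γ₁.eraseIdx kk).length := cs.length_wordProd_le _
            _ ≤ γ₁.length - 1 := by
                have := List.length_eraseIdx_add_one hlt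
                omega
        rw [hcancel] at hlen1
        omega
      · push_neg at hlt
        rw [List.eraseIdx_append_of_length_le hlt, cs.wordProd_append] at hkeq
        set a : W := (π γ₁)⁻¹ * σ j * π γ₁ with hadef
        have haJ : a ∈ Subgroup.closure (cs.simple '' J) := by
          have h1 : π γ₁ ∈ Subgroup.closure (cs.simple '' J) := wordProd_mem_closure cs hγ₁J
          have h2 : σ j ∈ Subgroup.closure (cs.simple '' J) :=
            Subgroup.subset_closure ⟨j, hγJ j (by simp), rfl⟩
          exact mul_mem (mul_mem (inv_mem h1) h2) h1
        have hab : a * b = π (β.eraseIdx (kk - γ₁.length)) := by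
          rw [hadef]
          rw [hxdef, ← mul_assoc] at hkeq
          calc (π γ₁)⁻¹ * σ j * π γ₁ * b = (π γ₁)⁻¹ * (σ j * π γ₁ * b) := by group
            _ = (π γ₁)⁻¹ * (π γ₁ * π (β.eraseIdx (kk - γ₁.length))) := by rw [hkeq]
            _ = π (β.eraseIdx (kk - γ₁.length)) := by group
        have hlen3 : ℓ (a * b) ≤ ℓ b - 1 := by
          rw [hab]
          calc ℓ (π (β.eraseIdx (kk - γ₁.length))) ≤ (β.eraseIdx (kk - γ₁.length)).length :=
              cs.length_wordProd_le _
            _ ≤ ℓ b - 1 := by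
                have hkk2 : kk - γ₁.length < β.length := by
                  rw [List.length_append] at hkk
                  omega
                have := List.length_eraseIdx_add_one hkk2
                omega
        have hge := hb a haJ
        have hbpos : 0 < ℓ b := by
          by_contra h0
          push_neg at h0
          interval_cases hb0 : ℓ b
          · -- b = 1 hence β = [], contradiction with kk index
            have : β.length = 0 := by omega
            rw [List.length_append] at hkk
            omega
        omega

lemma exists_coset_min (J : Set B) (u : W) :
    ∃ b₀ : W, (∃ a₀ ∈ Subgroup.closure (cs.simple '' J), u = a₀ * b₀) ∧
      ∀ a ∈ Subgroup.closure (cs.simple '' J), ℓ b₀ ≤ ℓ (a * b₀) := by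
  classical
  have hex : ∃ n, ∃ a, a ∈ Subgroup.closure (cs.simple '' J) ∧ ℓ (a * u) = n :=
    ⟨ℓ u, 1, one_mem _, by rw [one_mul]⟩
  obtain ⟨a', ha', hlen⟩ := Nat.find_spec hex
  refine ⟨a' * u, ⟨a'⁻¹, inv_mem ha', by group⟩, ?_⟩
  intro a ha
  have hmin : Nat.find hex ≤ ℓ ((a * a') * u) :=
    Nat.find_min' hex ⟨a * a', mul_mem ha ha', rfl⟩
  rw [hlen, ← mul_assoc]
  exact hmin

/-- Uniqueness of the parabolic factorization: the minimal part is the coset-minimal element. -/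
lemma factor_eq_coset_min {J : Set B} {u a b : W}
    (haJ : a ∈ Subgroup.closure (cs.simple '' J))
    (hbmin : ∀ i ∈ J, ℓ (σ i * b) > ℓ b)
    (hu : u = a * b)
    {a₀ b₀ : W} (ha₀ : a₀ ∈ Subgroup.closure (cs.simple '' J)) (hu₀ : u = a₀ * b₀)
    (hb₀ : ∀ a' ∈ Subgroup.closure (cs.simple '' J), ℓ b₀ ≤ ℓ (a' * b₀)) :
    b = b₀ := by
  set c := a⁻¹ * a₀ with hcdef
  have hcJ : c ∈ Subgroup.closure (cs.simple '' J) := mul_mem (inv_mem haJ) ha₀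
  have hbc : b = c * b₀ := by
    rw [hcdef]
    have : a * b = a₀ * b₀ := by rw [← hu, ← hu₀]
    rw [mul_assoc, ← this]
    group
  obtain ⟨γ, hγred, hγJ, hγeq⟩ := exists_reduced_word_over cs hcJ
  cases γ with
  | nil =>
    rw [hbc, ← hγeq, cs.wordProd_nil, one_mul]
  | cons j γ₁ =>
    exfalso
    have hjJ : j ∈ J := hγJ j (by simp)
    have hγ₁red : cs.IsReduced γ₁ := by
      have := CoxeterSystem.IsReduced.drop hγred 1
      simpa using this
    have hγ₁J : ∀ i ∈ γ₁, i ∈ J := fun i hi => hγJ i (by simp [hi])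
    have hsjb : σ j * b = π γ₁ * b₀ := by
      rw [hbc, ← hγeq, cs.wordProd_cons, ← mul_assoc, ← mul_assoc,
        cs.simple_mul_simple_self, one_mul]
    have hlb : ℓ b = (γ₁.length + 1) + ℓ b₀ := by
      rw [hbc, ← hγeq]
      have := length_coset_min_mul cs hb₀ (j :: γ₁) hγred hγJ
      rw [this, List.length_cons]
    have hlsjb : ℓ (σ j * b) = γ₁.length + ℓ b₀ := by
      rw [hsjb]
      exact length_coset_min_mul cs hb₀ γ₁ hγ₁red hγ₁J
    have := hbmin j hjJ
    omega

/-- The key induction for monotonicity of the parabolic projection. -/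
lemma main_induction {J : Set B} : ∀ n : ℕ, ∀ u v uJ uR vJ vR : W,
    (uJ ∈ Subgroup.closure (cs.simple '' J)) →
    (∀ i ∈ J, ℓ (σ i * uR) > ℓ uR) →
    u = uJ * uR →
    ℓ u = ℓ uJ + ℓ uR →
    (vJ ∈ Subgroup.closure (cs.simple '' J)) →
    (∀ i ∈ J, ℓ (σ i * vR) > ℓ vR) →
    v = vJ * vR →
    ℓ v = ℓ vJ + ℓ vR →
    ℓ u + ℓ (u⁻¹ * v) = ℓ v →
    ℓ (u⁻¹ * v) = n →
    ℓ uJ + ℓ (uJ⁻¹ * vJ) = ℓ vJ := by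
  intro n
  induction n with
  | zero =>
    intro u v uJ uR vJ vR hu1 hu2 hu3 hu4 hv1 hv2 hv3 hv4 huv hn
    have huv1 : u⁻¹ * v = 1 := cs.length_eq_zero_iff.mp hn
    have huveq : v = u := (inv_mul_eq_one.mp huv1).symm
    subst huveq
    obtain ⟨b₀, ⟨a₀, ha₀, hu₀⟩, hb₀⟩ := exists_coset_min cs J v
    have e1 : uR = b₀ := factor_eq_coset_min cs hu1 hu2 hu3 ha₀ hu₀ hb₀
    have e2 : vR = b₀ := factor_eq_coset_min cs hv1 hv2 hv3 ha₀ hu₀ hb₀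
    have e3 : uJ = vJ := by
      have : uJ * uR = vJ * vR := by rw [← hu3, ← hv3]
      rw [e1, e2] at this
      exact mul_right_cancel this
    rw [e3, inv_mul_cancel, cs.length_one]
    omega
  | succ n ih =>
    intro u v uJ uR vJ vR hu1 hu2 hu3 hu4 hv1 hv2 hv3 hv4 huv hn
    set w := u⁻¹ * v with hwdef
    obtain ⟨ω, hωred, hωeq⟩ := cs.exists_reduced_word' w
    cases ω with
    | nil =>
      exfalso
      rw [cs.wordProd_nil] at hωeq
      rw [hωeq, cs.length_one] at hn
      omega
    | cons c ω' =>
      have hω'red : cs.IsReduced ω' := by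
        have := CoxeterSystem.IsReduced.drop hωred 1
        simpa using this
      have hω'len : ω'.length = n := by
        have := hωred
        rw [CoxeterSystem.IsReduced, ← hωeq, hn, List.length_cons] at this
        omega
      set u' := u * σ c with hu'def
      have hv_eq : v = u' * π ω' := by
        rw [hu'def, mul_assoc, ← cs.wordProd_cons, ← hωeq, hwdef]
        group
      have hπω' : ℓ (π ω') = n := by
        rw [← hω'len]
        exact hω'red
      have hu'v : u'⁻¹ * v = π ω' := by
        rw [hv_eq]
        group
      have hlu' : ℓ u' = ℓ u + 1 := by
        have hle : ℓ u' ≤ ℓ u + 1 := by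
          calc ℓ u' ≤ ℓ u + ℓ (σ c) := cs.length_mul_le u (σ c)
            _ = ℓ u + 1 := by rw [cs.length_simple]
        have hge : ℓ v ≤ ℓ u' + n := by
          calc ℓ v = ℓ (u' * π ω') := by rw [← hv_eq]
            _ ≤ ℓ u' + ℓ (π ω') := cs.length_mul_le _ _
            _ = ℓ u' + n := by rw [hπω']
        omega
      have huv' : ℓ u' + ℓ (u'⁻¹ * v) = ℓ v := by
        rw [hu'v, hπω', hlu']
        omega
      have hn' : ℓ (u'⁻¹ * v) = n := by rw [hu'v, hπω']
      set x := uR * σ c with hxdef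
      have hu'fact : u' = uJ * x := by
        rw [hu'def, hxdef, hu3, mul_assoc]
      have hlx : ℓ x = ℓ uR + 1 := by
        have hle : ℓ x ≤ ℓ uR + 1 := by
          calc ℓ x ≤ ℓ uR + ℓ (σ c) := cs.length_mul_le uR (σ c)
            _ = ℓ uR + 1 := by rw [cs.length_simple]
        have hge : ℓ u' ≤ ℓ uJ + ℓ x := by
          rw [hu'fact]
          exact cs.length_mul_le _ _
        omega
      by_cases hmin : ∀ i ∈ J, ℓ (σ i * x) > ℓ x
      · exact ih u' v uJ x vJ vR hu1 hmin hu'fact (by omega) hv1 hv2 hv3 hv4 huv' hn'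
      · push_neg at hmin
        obtain ⟨j, hjJ, hjle⟩ := hmin
        have hjlt : ℓ (σ j * x) < ℓ x :=
          lt_of_le_of_ne hjle (cs.length_simple_mul_ne x j)
        obtain ⟨χ, hχred, hχeq⟩ := cs.exists_reduced_word' uR
        have hχlen : χ.length = ℓ uR := by
          rw [CoxeterSystem.IsReduced, ← hχeq] at hχred
          omega
        have hχred' : cs.IsReduced χ := by
          rw [CoxeterSystem.IsReduced, ← hχeq, hχlen]
        have hcatπ : π (χ ++ [c]) = x := by
          rw [cs.wordProd_append, CoxeterSystem.wordProd_singleton, ← hχeq, hxdef]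
        have hcatred : cs.IsReduced (χ ++ [c]) := by
          rw [CoxeterSystem.IsReduced, hcatπ, List.length_append, List.length_singleton,
            hχlen, hlx]
        have hinv : cs.IsLeftInversion (π (χ ++ [c])) (σ j) := by
          rw [hcatπ]
          exact ⟨cs.isReflection_simple j, hjlt⟩
        obtain ⟨k, hk, hkeq⟩ := left_exchange cs hcatred hinv
        rw [hcatπ] at hkeq
        by_cases hklt : k < χ.length
        · exfalso
          rw [List.eraseIdx_append_of_lt_length hklt, cs.wordProd_append,
            CoxeterSystem.wordProd_singleton] at hkeq
          have hcancel : σ j * uR = π (χ.eraseIdx k) := by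
            apply mul_right_cancel (b := σ c)
            rw [← hkeq, hxdef]
            group
          have hlen1 : ℓ (σ j * uR) ≤ ℓ uR - 1 := by
            calc ℓ (σ j * uR) = ℓ (π (χ.eraseIdx k)) := by rw [hcancel]
              _ ≤ (χ.eraseIdx k).length := cs.length_wordProd_le _
              _ ≤ ℓ uR - 1 := by
                  have := List.length_eraseIdx_add_one hklt
                  omega
          have := hu2 j hjJ
          have hpos : 0 < ℓ uR := by omega
          omega
        · push_neg at hklt
          have hkeq2 : σ j * x = uR := by
            rw [List.eraseIdx_append_of_length_le hklt] at hkeq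
            have hk0 : k - χ.length = 0 := by
              rw [List.length_append, List.length_singleton] at hk
              omega
            rw [hk0] at hkeq
            simpa [cs.wordProd_append, ← hχeq] using hkeq
          have hx_eq : x = σ j * uR := by
            rw [← hkeq2, ← mul_assoc, cs.simple_mul_simple_self, one_mul]
          have hlsj : ℓ (uJ * σ j) = ℓ uJ + 1 := by
            have hle : ℓ (uJ * σ j) ≤ ℓ uJ + 1 := by
              calc ℓ (uJ * σ j) ≤ ℓ uJ + ℓ (σ j) := cs.length_mul_le _ _
                _ = ℓ uJ + 1 := by rw [cs.length_simple]
            have hge : ℓ u' ≤ ℓ (uJ * σ j) + ℓ uR := by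
              calc ℓ u' = ℓ ((uJ * σ j) * uR) := by
                    rw [hu'fact, hx_eq, mul_assoc]
                _ ≤ ℓ (uJ * σ j) + ℓ uR := cs.length_mul_le _ _
            omega
          have ihres := ih u' v (uJ * σ j) uR vJ vR
            (mul_mem hu1 (Subgroup.subset_closure ⟨j, hjJ, rfl⟩))
            hu2
            (by rw [hu'fact, hx_eq, mul_assoc])
            (by omega)
            hv1 hv2 hv3 hv4 huv' hn'
          have hsimp : (uJ * σ j)⁻¹ * vJ = σ j * (uJ⁻¹ * vJ) := by
            rw [mul_inv_rev, cs.inv_simple, mul_assoc]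
          rw [hsimp] at ihres
          set y := uJ⁻¹ * vJ with hydef
          have hy1 : ℓ y ≤ 1 + ℓ (σ j * y) := by
            calc ℓ y = ℓ (σ j * (σ j * y)) := by
                  rw [← mul_assoc, cs.simple_mul_simple_self, one_mul]
              _ ≤ ℓ (σ j) + ℓ (σ j * y) := cs.length_mul_le _ _
              _ = 1 + ℓ (σ j * y) := by rw [cs.length_simple]
          have hy2 : ℓ vJ ≤ ℓ uJ + ℓ y := by
            calc ℓ vJ = ℓ (uJ * y) := by rw [hydef]; group
              _ ≤ ℓ uJ + ℓ y := cs.length_mul_le _ _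
          omega

end ParabolicProof

/-- The projection `w ↦ w_J` onto a standard parabolic subgroup is order-preserving for
the right weak order: if `ℓ(u) + ℓ(u⁻¹v) = ℓ(v)` then `ℓ(u_J) + ℓ(u_J⁻¹ v_J) = ℓ(v_J)`. -/
theorem parabolic_projection_monotone {B : Type*} {W : Type*} [Group W] [Finite W]
    {M : CoxeterMatrix B} (cs : CoxeterSystem M W) (J : Set B)
    (u v uJ uR vJ vR : W)
    (hu : IsParabolicFactorization cs J u uJ uR)
    (hv : IsParabolicFactorization cs J v vJ vR)
    (huv : cs.length u + cs.length (u⁻¹ * v) = cs.length v) :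
    cs.length uJ + cs.length (uJ⁻¹ * vJ) = cs.length vJ := by
  obtain ⟨hu1, hu2, hu3, hu4⟩ := hu
  obtain ⟨hv1, hv2, hv3, hv4⟩ := hv
  exact ParabolicProof.main_induction cs (cs.length (u⁻¹ * v)) u v uJ uR vJ vR
    hu1 hu2 hu3 hu4 hv1 hv2 hv3 hv4 huv rfl
end

section
/- The 1-skeleton of the W-permutahedron has the non-leaving-face ('in-your-face') property: if two vertices u, w of the W-permutahedron lie on a common face f, then every geodesic in the 1-skeleton from u to w stays in f. Equivalently, in graph-theoretic terms: if u, w ∈ W satisfy u⁻¹w ∈ W_J for a standard parabolic W_J, then every geodesic between u and w in the Cayley graph of (W,S) stays inside the coset uW_J. -/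
/-- The 1-skeleton of the `W`-permutahedron: the Cayley graph of `(W,S)`, with vertex set
`W` and edges `{w, w * s}` for simple reflections `s`. -/
def cayleyGraph {B : Type*} {W : Type*} [Group W] {M : CoxeterMatrix B}
    (cs : CoxeterSystem M W) : SimpleGraph W :=
  SimpleGraph.fromRel (fun u v => ∃ i : B, v = u * cs.simple i)

namespace InYourFace

open List CoxeterSystem

variable {B : Type*} {W : Type*} [Group W] {M : CoxeterMatrix B} (cs : CoxeterSystem M W)

open scoped Classical in
/-- Indicator function with values in `ZMod 2`. -/
noncomputable def chi (t u : W) : ZMod 2 := if t = u then 1 else 0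

theorem chi_conj (a t b : W) : chi (a * t * a⁻¹) b = chi t (a⁻¹ * b * a) := by
  have h : (a * t * a⁻¹ = b) ↔ (t = a⁻¹ * b * a) := by
    constructor
    · intro h; rw [← h]; group
    · intro h; rw [h]; group
  unfold chi
  by_cases hh : a * t * a⁻¹ = b
  · rw [if_pos hh, if_pos (h.mp hh)]
  · rw [if_neg hh, if_neg (fun hc => hh (h.mpr hc))]

theorem chi_self (t : W) : chi t t = 1 := by unfold chi; simp

theorem chi_eq_zero {t u : W} (h : t ≠ u) : chi t u = 0 := by unfold chi; simp [h]

theorem chi_sum_eq_zero {t : W} {l : List W} (h : t ∉ l) :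
    (l.map (chi t)).sum = 0 := by
  apply List.sum_eq_zero
  intro x hx
  obtain ⟨u, hu, rfl⟩ := List.mem_map.mp hx
  exact chi_eq_zero (fun he => h (he ▸ hu))

/-- The permutation of `W × ZMod 2` associated to the simple reflection `i`. -/
noncomputable def refPerm (i : B) : Equiv.Perm (W × ZMod 2) :=
  Function.Involutive.toPerm
    (fun p => (cs.simple i * p.1 * cs.simple i, p.2 + chi p.1 (cs.simple i))) <| by
      intro p
      have h1 : cs.simple i * (cs.simple i * p.1 * cs.simple i) * cs.simple i = p.1 := by
        rw [mul_assoc (cs.simple i) p.1, cs.simple_mul_simple_cancel_left,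
          cs.simple_mul_simple_cancel_right]
      have h2 : chi (cs.simple i * p.1 * cs.simple i) (cs.simple i) = chi p.1 (cs.simple i) := by
        nth_rewrite 2 [← cs.inv_simple i]
        rw [chi_conj, cs.inv_simple]
        congr 1
        rw [cs.simple_mul_simple_self, one_mul]
      simp only [h1, h2]
      have : ∀ a : ZMod 2, a + a = 0 := by decide
      rw [Prod.ext_iff]
      refine ⟨rfl, ?_⟩
      simp [add_assoc, this]

theorem refPerm_apply (i : B) (t : W) (ε : ZMod 2) :
    refPerm cs i (t, ε) = (cs.simple i * t * cs.simple i, ε + chi t (cs.simple i)) := rfl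

theorem refPerm_liftable : M.IsLiftable (refPerm cs) := by
  intro i j
  set c := cs.simple i * cs.simple j with hc
  have hkey : cs.simple j * c = c⁻¹ * cs.simple j := by
    rw [hc, mul_inv_rev, cs.inv_simple, cs.inv_simple, mul_assoc]
  have hconj : ∀ r : ℕ, c⁻¹ * ((c⁻¹) ^ r * cs.simple j) * c = (c⁻¹) ^ (r + 2) * cs.simple j := by
    intro r
    calc c⁻¹ * ((c⁻¹) ^ r * cs.simple j) * c
        = c⁻¹ * ((c⁻¹) ^ r * (cs.simple j * c)) := by group
      _ = c⁻¹ * ((c⁻¹) ^ r * (c⁻¹ * cs.simple j)) := by rw [hkey]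
      _ = (c⁻¹ * ((c⁻¹) ^ r * c⁻¹)) * cs.simple j := by group
      _ = (c⁻¹) ^ (r + 2) * cs.simple j := by
          rw [show r + 2 = 1 + r + 1 by omega, pow_add, pow_add, pow_one]
          group
  have key : ∀ (k : ℕ) (t : W) (ε : ZMod 2),
      ((refPerm cs i * refPerm cs j) ^ k) (t, ε) =
        (c ^ k * t * (c⁻¹) ^ k,
          ε + ∑ r ∈ Finset.range (k + k), chi t ((c⁻¹) ^ r * cs.simple j)) := by
    intro k
    induction k with
    | zero => intro t ε; simp
    | succ k ihk =>
      intro t ε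
      rw [pow_succ, Equiv.Perm.mul_apply]
      have hg : (refPerm cs i * refPerm cs j) (t, ε) =
          (c * t * c⁻¹, ε + (chi t ((c⁻¹) ^ 0 * cs.simple j) + chi t ((c⁻¹) ^ 1 * cs.simple j))) := by
        rw [Equiv.Perm.mul_apply, refPerm_apply, refPerm_apply]
        rw [Prod.ext_iff]
        constructor
        · show cs.simple i * (cs.simple j * t * cs.simple j) * cs.simple i = c * t * c⁻¹
          rw [hc, mul_inv_rev, cs.inv_simple, cs.inv_simple]; group
        · show ε + chi t (cs.simple j) + chi (cs.simple j * t * cs.simple j) (cs.simple i) = _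
          have h2 : chi (cs.simple j * t * cs.simple j) (cs.simple i)
              = chi t ((c⁻¹) ^ 1 * cs.simple j) := by
            nth_rewrite 1 [show cs.simple j * t * cs.simple j
              = cs.simple j * t * (cs.simple j)⁻¹ by rw [cs.inv_simple]]
            rw [chi_conj, cs.inv_simple]
            congr 1
            rw [pow_one, hc, mul_inv_rev, cs.inv_simple, cs.inv_simple, mul_assoc]
          rw [h2, pow_zero, one_mul, add_assoc]
      rw [hg, ihk]
      rw [Prod.ext_iff]
      constructor
      · show c ^ k * (c * t * c⁻¹) * (c⁻¹) ^ k = c ^ (k + 1) * t * (c⁻¹) ^ (k + 1)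
        rw [pow_succ' c k, pow_succ (c⁻¹) k]; group
      · show ε + (chi t ((c⁻¹) ^ 0 * cs.simple j) + chi t ((c⁻¹) ^ 1 * cs.simple j))
            + ∑ r ∈ Finset.range (k + k), chi (c * t * c⁻¹) ((c⁻¹) ^ r * cs.simple j)
          = ε + ∑ r ∈ Finset.range (k + 1 + (k + 1)), chi t ((c⁻¹) ^ r * cs.simple j)
        have hterm : ∀ r : ℕ, chi (c * t * c⁻¹) ((c⁻¹) ^ r * cs.simple j)
            = chi t ((c⁻¹) ^ (r + 2) * cs.simple j) := by
          intro r
          rw [chi_conj]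
          congr 1
          exact hconj r
        simp only [hterm]
        rw [show k + 1 + (k + 1) = k + k + 1 + 1 by omega]
        rw [Finset.sum_range_succ', Finset.sum_range_succ']
        simp only [show ∀ r : ℕ, r + 1 + 1 = r + 2 from fun r => rfl]
        abel
  have hcm : c ^ (M i j) = 1 := cs.simple_mul_simple_pow i j
  have hcm' : (c⁻¹) ^ (M i j) = 1 := by rw [inv_pow, hcm, inv_one]
  apply Equiv.ext
  rintro ⟨t, ε⟩
  rw [key (M i j) t ε]
  have hsum : ∑ r ∈ Finset.range (M i j + M i j), chi t ((c⁻¹) ^ r * cs.simple j) = 0 := by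
    rw [Finset.sum_range_add]
    have : ∀ r : ℕ, chi t ((c⁻¹) ^ (M i j + r) * cs.simple j)
        = chi t ((c⁻¹) ^ r * cs.simple j) := by
      intro r; rw [pow_add, hcm', one_mul]
    simp only [this]
    have h2 : ∀ a : ZMod 2, a + a = 0 := by decide
    exact h2 _
  rw [hcm, hcm', hsum]
  simp

/-- The lifted homomorphism `W →* Perm (W × ZMod 2)`. -/
noncomputable def phi : W →* Equiv.Perm (W × ZMod 2) :=
  cs.lift ⟨refPerm cs, refPerm_liftable cs⟩

theorem phi_simple (i : B) : phi cs (cs.simple i) = refPerm cs i :=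
  cs.lift_apply_simple (refPerm_liftable cs) i

theorem phi_wordProd (ω : List B) (t : W) (ε : ZMod 2) :
    phi cs (cs.wordProd ω) (t, ε) =
      (cs.wordProd ω * t * (cs.wordProd ω)⁻¹,
        ε + ((cs.rightInvSeq ω).map (chi t)).sum) := by
  induction ω with
  | nil => simp [phi]
  | cons i ω ih =>
    rw [cs.wordProd_cons, map_mul, Equiv.Perm.mul_apply, ih, phi_simple, refPerm_apply]
    have hris : cs.rightInvSeq (i :: ω) =
        ((cs.wordProd ω)⁻¹ * cs.simple i * cs.wordProd ω) :: cs.rightInvSeq ω := rfl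
    rw [hris, Prod.ext_iff]
    constructor
    · show cs.simple i * (cs.wordProd ω * t * (cs.wordProd ω)⁻¹) * cs.simple i
        = cs.simple i * cs.wordProd ω * t * (cs.simple i * cs.wordProd ω)⁻¹
      rw [mul_inv_rev, cs.inv_simple]; group
    · show ε + ((cs.rightInvSeq ω).map (chi t)).sum
          + chi (cs.wordProd ω * t * (cs.wordProd ω)⁻¹) (cs.simple i) = _
      rw [chi_conj]
      simp only [List.map_cons, List.sum_cons]
      abel

theorem phi_apply (w t : W) (ε : ZMod 2) :
    phi cs w (t, ε) = (w * t * w⁻¹, ε + (phi cs w (t, 0)).2) := by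
  obtain ⟨ω, rfl⟩ := cs.wordProd_surjective w
  rw [phi_wordProd, phi_wordProd, zero_add]

theorem phi_isReflection {t : W} (ht : cs.IsReflection t) (ε : ZMod 2) :
    phi cs t (t, ε) = (t, ε + 1) := by
  obtain ⟨q, i, rfl⟩ := ht
  set t := q * cs.simple i * q⁻¹ with hts
  set c := (phi cs q⁻¹ (t, 0)).2 with hcdef
  set d := (phi cs q (cs.simple i, 0)).2 with hddef
  have h1 : ∀ δ : ZMod 2, phi cs q⁻¹ (t, δ) = (cs.simple i, δ + c) := by
    intro δ
    rw [phi_apply]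
    congr 1
    rw [hts]; group
  have h3 : ∀ δ : ZMod 2, phi cs q (cs.simple i, δ) = (t, δ + d) := by
    intro δ
    rw [phi_apply]
  have hdc : c + d = 0 := by
    have : phi cs q (phi cs q⁻¹ (t, 0)) = (t, 0) := by
      rw [← Equiv.Perm.mul_apply, ← map_mul, mul_inv_cancel, map_one, Equiv.Perm.one_apply]
    rw [h1 0, zero_add] at this
    have h2 := h3 c
    rw [h2] at this
    have := congrArg Prod.snd this
    simpa using this
  have hsplit : phi cs t (t, ε) = phi cs q (phi cs (cs.simple i) (phi cs q⁻¹ (t, ε))) := by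
    rw [← Equiv.Perm.mul_apply, ← Equiv.Perm.mul_apply, ← map_mul, ← map_mul, hts]
  rw [hsplit, h1, phi_simple, refPerm_apply, cs.simple_mul_simple_cancel_right,
    chi_self, h3]
  rw [Prod.ext_iff]
  refine ⟨rfl, ?_⟩
  show ε + c + 1 + d = ε + 1
  have : ε + c + 1 + d = ε + 1 + (c + d) := by abel
  rw [this, hdc, add_zero]

/-- Strong exchange property (for arbitrary words). -/
theorem strong_exchange (ω : List B) {t : W} (ht : cs.IsReflection t)
    (hl : cs.length (cs.wordProd ω * t) < cs.length (cs.wordProd ω)) :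
    t ∈ cs.rightInvSeq ω := by
  by_contra hmem
  obtain ⟨ψ, hψred, hψ⟩ := cs.exists_reduced_word' (cs.wordProd ω * t)
  have htψ : t ∉ cs.rightInvSeq ψ := by
    intro hmem'
    have h2 := (cs.isRightInversion_of_mem_rightInvSeq hψred hmem').2
    rw [← hψ, mul_assoc, ht.mul_self, mul_one] at h2
    omega
  have hw : cs.wordProd ω = cs.wordProd ψ * t := by
    rw [← hψ, mul_assoc, ht.mul_self, mul_one]
  have e1 : (phi cs (cs.wordProd ω) (t, 0)).2 = 0 := by
    rw [phi_wordProd, chi_sum_eq_zero hmem, add_zero]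
  have e2 : (phi cs (cs.wordProd ω) (t, 0)).2 = 1 := by
    rw [hw, map_mul, Equiv.Perm.mul_apply, phi_isReflection cs ht, zero_add,
      phi_wordProd, chi_sum_eq_zero htψ, add_zero]
  rw [e1] at e2
  exact absurd e2 (by decide)

theorem wordProd_mem (K : Subgroup W) {η : List B} (hη : ∀ j ∈ η, cs.simple j ∈ K) :
    cs.wordProd η ∈ K := by
  induction η with
  | nil => rw [cs.wordProd_nil]; exact one_mem K
  | cons j η ih =>
    rw [cs.wordProd_cons]
    exact mul_mem (hη j (List.mem_cons_self)) (ih fun k hk => hη k (List.mem_cons_of_mem j hk))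

theorem rightInvSeq_mem (K : Subgroup W) {η : List B} (hη : ∀ j ∈ η, cs.simple j ∈ K)
    {t : W} (ht : t ∈ cs.rightInvSeq η) : t ∈ K := by
  induction η with
  | nil => simp at ht
  | cons j η ih =>
    have hd : cs.rightInvSeq (j :: η) =
        ((cs.wordProd η)⁻¹ * cs.simple j * cs.wordProd η) :: cs.rightInvSeq η := rfl
    rw [hd, List.mem_cons] at ht
    have hη' : ∀ k ∈ η, cs.simple k ∈ K := fun k hk => hη k (List.mem_cons_of_mem j hk)
    rcases ht with rfl | ht
    · exact mul_mem (mul_mem (inv_mem (wordProd_mem cs K hη'))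
        (hη j (List.mem_cons_self))) (wordProd_mem cs K hη')
    · exact ih hη' ht

theorem exists_word_of_mem_closure (J : Set B) {w : W}
    (hw : w ∈ Subgroup.closure (cs.simple '' J)) :
    ∃ η : List B, (∀ j ∈ η, cs.simple j ∈ cs.simple '' J) ∧ cs.wordProd η = w := by
  induction hw using Subgroup.closure_induction with
  | mem x hx =>
    obtain ⟨j, hj, rfl⟩ := hx
    exact ⟨[j], by simpa using ⟨j, hj, rfl⟩, cs.wordProd_singleton j⟩
  | one => exact ⟨[], by simp, cs.wordProd_nil⟩
  | mul x y hx hy ihx ihy =>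
    obtain ⟨η₁, h₁, rfl⟩ := ihx
    obtain ⟨η₂, h₂, rfl⟩ := ihy
    refine ⟨η₁ ++ η₂, ?_, cs.wordProd_append η₁ η₂⟩
    intro j hj
    rcases List.mem_append.mp hj with h | h
    · exact h₁ j h
    · exact h₂ j h
  | inv x hx ihx =>
    obtain ⟨η, h₁, rfl⟩ := ihx
    exact ⟨η.reverse, fun j hj => h₁ j (List.mem_reverse.mp hj), cs.wordProd_reverse η⟩

theorem simple_mem_of_descent (J : Set B) {w : W}
    (hw : w ∈ Subgroup.closure (cs.simple '' J)) {i : B}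
    (hd : cs.length (w * cs.simple i) < cs.length w) :
    cs.simple i ∈ Subgroup.closure (cs.simple '' J) := by
  obtain ⟨η, hη, rfl⟩ := exists_word_of_mem_closure cs J hw
  have hmem : cs.simple i ∈ cs.rightInvSeq η :=
    strong_exchange cs η (cs.isReflection_simple i) hd
  exact rightInvSeq_mem cs _ (fun j hj => Subgroup.subset_closure (hη j hj)) hmem

theorem letters_mem (J : Set B) :
    ∀ ω : List B, cs.IsReduced ω → cs.wordProd ω ∈ Subgroup.closure (cs.simple '' J) →
      ∀ j ∈ ω, cs.simple j ∈ Subgroup.closure (cs.simple '' J) := by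
  intro ω
  induction ω using List.reverseRecOn with
  | nil => simp
  | append_singleton α i ih =>
    intro hred hw
    have hα : cs.IsReduced α := by
      have h := hred.take α.length
      rwa [List.take_left] at h
    have heq : cs.wordProd (α ++ [i]) * cs.simple i = cs.wordProd α := by
      rw [cs.wordProd_append, cs.wordProd_singleton, cs.simple_mul_simple_cancel_right]
    have hd : cs.length (cs.wordProd (α ++ [i]) * cs.simple i)
        < cs.length (cs.wordProd (α ++ [i])) := by
      rw [heq, hred]
      have h1 : cs.length (cs.wordProd α) ≤ α.length := cs.length_wordProd_le α
      have h2 : (α ++ [i]).length = α.length + 1 := by simp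
      rw [hα] at h1 ⊢
      omega
    have hsi := simple_mem_of_descent cs J hw hd
    have hαmem : cs.wordProd α ∈ Subgroup.closure (cs.simple '' J) := by
      rw [← heq]; exact mul_mem hw hsi
    intro j hj
    rcases List.mem_append.mp hj with h | h
    · exact ih hα hαmem j h
    · rw [List.mem_singleton] at h; subst h; exact hsi

theorem walk_word {u w : W} (p : (cayleyGraph cs).Walk u w) :
    ∃ ω : List B, ω.length = p.length ∧ cs.wordProd ω = u⁻¹ * w ∧
      ∀ x ∈ p.support, ∃ k, x = u * cs.wordProd (ω.take k) := by
  induction p with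
  | nil => exact ⟨[], rfl, by simp, fun x hx => ⟨0, by simpa using hx⟩⟩
  | @cons u v w h q ih =>
    obtain ⟨ω, hlen, hprod, hsup⟩ := ih
    rw [cayleyGraph, SimpleGraph.fromRel_adj] at h
    obtain ⟨hne, hor⟩ := h
    have hv : ∃ i, v = u * cs.simple i := by
      rcases hor with ⟨i, hi⟩ | ⟨i, hi⟩
      · exact ⟨i, hi⟩
      · exact ⟨i, by rw [hi, cs.simple_mul_simple_cancel_right]⟩
    obtain ⟨i, rfl⟩ := hv
    refine ⟨i :: ω, by simp [hlen], ?_, ?_⟩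
    · rw [cs.wordProd_cons, hprod, mul_inv_rev, cs.inv_simple, ← mul_assoc, ← mul_assoc,
        cs.simple_mul_simple_self, one_mul]
    · intro x hx
      rw [SimpleGraph.Walk.support_cons, List.mem_cons] at hx
      rcases hx with rfl | hx
      · exact ⟨0, by simp⟩
      · obtain ⟨k, hk⟩ := hsup x hx
        exact ⟨k + 1, by rw [List.take_succ_cons, cs.wordProd_cons, hk, ← mul_assoc]⟩

theorem word_walk (ω : List B) : ∀ u w : W, cs.wordProd ω = u⁻¹ * w →
    ∃ p : (cayleyGraph cs).Walk u w, p.length = ω.length := by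
  induction ω with
  | nil =>
    intro u w h
    rw [cs.wordProd_nil] at h
    have : w = u := by
      have := congrArg (u * ·) h
      simpa using this.symm
    subst this
    exact ⟨SimpleGraph.Walk.nil, rfl⟩
  | cons i ω ih =>
    intro u w h
    have hadj : (cayleyGraph cs).Adj u (u * cs.simple i) := by
      rw [cayleyGraph, SimpleGraph.fromRel_adj]
      refine ⟨?_, Or.inl ⟨i, rfl⟩⟩
      intro heq
      have h1 : cs.simple i = 1 := by
        have := congrArg (u⁻¹ * ·) heq
        simpa [← mul_assoc] using this.symm
      have h2 := cs.length_simple i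
      rw [h1, cs.length_one] at h2
      omega
    have hrest : cs.wordProd ω = (u * cs.simple i)⁻¹ * w := by
      rw [cs.wordProd_cons] at h
      rw [mul_inv_rev, cs.inv_simple, mul_assoc, ← h, cs.simple_mul_simple_cancel_left]
    obtain ⟨q, hq⟩ := ih (u * cs.simple i) w hrest
    exact ⟨SimpleGraph.Walk.cons hadj q, by simp [hq]⟩

end InYourFace

/-- The `W`-permutahedron is in-your-face: if `u⁻¹ * w` lies in the standard parabolic
subgroup `W_J`, then every geodesic from `u` to `w` in the Cayley graph of `(W,S)` stays
inside the coset `u * W_J`. -/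
theorem permutahedron_in_your_face {B : Type*} {W : Type*} [Group W] [Finite W]
    {M : CoxeterMatrix B} (cs : CoxeterSystem M W) (J : Set B) (u w : W)
    (huw : u⁻¹ * w ∈ Subgroup.closure (cs.simple '' J))
    (p : (cayleyGraph cs).Walk u w)
    (hp : p.length = (cayleyGraph cs).dist u w) :
    ∀ x ∈ p.support, u⁻¹ * x ∈ Subgroup.closure (cs.simple '' J) := by
  obtain ⟨ω, hlen, hprod, hsup⟩ := InYourFace.walk_word cs p
  obtain ⟨θ, hθlen, hθprod⟩ := cs.exists_reduced_word (u⁻¹ * w)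
  obtain ⟨q, hq⟩ := InYourFace.word_walk cs θ u w hθprod.symm
  have hdist : (cayleyGraph cs).dist u w ≤ cs.length (u⁻¹ * w) := by
    rw [hθprod, hθlen, ← hq]
    exact SimpleGraph.dist_le q
  have hred : cs.IsReduced ω := by
    have h1 : cs.length (cs.wordProd ω) ≤ ω.length := cs.length_wordProd_le ω
    have h2 : ω.length ≤ cs.length (cs.wordProd ω) := by
      rw [hlen, hp, hprod]
      exact hdist
    exact le_antisymm h1 h2
  have hmem : ∀ j ∈ ω, cs.simple j ∈ Subgroup.closure (cs.simple '' J) :=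
    InYourFace.letters_mem cs J ω hred (hprod ▸ huw)
  intro x hx
  obtain ⟨k, rfl⟩ := hsup x hx
  have h3 : u⁻¹ * (u * cs.wordProd (ω.take k)) = cs.wordProd (ω.take k) := by group
  rw [h3]
  exact InYourFace.wordProd_mem cs _ fun j hj => hmem j (List.mem_of_mem_take hj)
end

section
/- For a finite Coxeter system (W,S) with distance d on W given by graph distance in the Cayley graph with generating set S (equivalently d(u,v) = ℓ(u⁻¹v)), and for any J ⊆ S, the parabolic projection w ↦ w_J is 1-Lipschitz: d(u_J, v_J) ≤ d(u, v) for all u, v ∈ W. -/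
open CoxeterSystem List
section ParabolicAux
variable {B : Type*} {W : Type*} [Group W] {M : CoxeterMatrix B} (cs : CoxeterSystem M W)

lemma csAux_conj_self (i : B) (u : W) :
    cs.simple i * (cs.simple i * u * cs.simple i) * cs.simple i = u := by
  have h := cs.simple_mul_simple_self i
  calc cs.simple i * (cs.simple i * u * cs.simple i) * cs.simple i
      = (cs.simple i * cs.simple i) * u * (cs.simple i * cs.simple i) := by group
    _ = u := by rw [h, one_mul, mul_one]

lemma csAux_conj_eq_iff (i : B) (u : W) :
    (cs.simple i * u * cs.simple i = cs.simple i) ↔ (u = cs.simple i) := by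
  constructor
  · intro h
    have h1 := csAux_conj_self cs i u
    rw [h] at h1
    rw [← h1, cs.simple_mul_simple_self, one_mul]
  · rintro rfl; rw [cs.simple_mul_simple_self, one_mul]

open Classical in
noncomputable def csEta (i : B) : Equiv.Perm (W × ZMod 2) where
  toFun p := (cs.simple i * p.1 * cs.simple i, p.2 + if p.1 = cs.simple i then 1 else 0)
  invFun p := (cs.simple i * p.1 * cs.simple i, p.2 + if p.1 = cs.simple i then 1 else 0)
  left_inv p := by
    obtain ⟨u, e⟩ := p
    simp only [csAux_conj_self, csAux_conj_eq_iff, Prod.mk.injEq, true_and]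
    split_ifs with h
    · rw [add_assoc]; norm_num; decide
    · rw [add_zero, add_zero]
  right_inv p := by
    obtain ⟨u, e⟩ := p
    simp only [csAux_conj_self, csAux_conj_eq_iff, Prod.mk.injEq, true_and]
    split_ifs with h
    · rw [add_assoc]; norm_num; decide
    · rw [add_zero, add_zero]

open Classical in
lemma csEta_apply (i : B) (p : W × ZMod 2) :
    csEta cs i p = (cs.simple i * p.1 * cs.simple i,
      p.2 + if p.1 = cs.simple i then 1 else 0) := rfl

lemma csAux_sandwich_iff (a : W) (ha : a * a = 1) (x c : W) :
    (a * x * a = c) ↔ (x = a * c * a) := by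
  have key : ∀ y : W, a * (a * y * a) * a = y := by
    intro y
    calc a * (a * y * a) * a = (a * a) * y * (a * a) := by group
      _ = y := by rw [ha, one_mul, mul_one]
  constructor
  · rintro rfl
    exact (key x).symm
  · rintro rfl
    exact key c

open Classical in
lemma csEta_mul_pow_apply (i j : B) (m : ℕ) (p : W × ZMod 2) :
    ((csEta cs i * csEta cs j) ^ m) p =
      ((cs.simple i * cs.simple j) ^ m * p.1 * ((cs.simple i * cs.simple j) ^ m)⁻¹,
        p.2 + ∑ k ∈ Finset.range (2 * m),
          if p.1 = (cs.simple j * cs.simple i) ^ k * cs.simple j then 1 else 0) := by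
  set a := cs.simple i with hadef
  set b := cs.simple j with hbdef
  have ha : a * a = 1 := cs.simple_mul_simple_self i
  have hb : b * b = 1 := cs.simple_mul_simple_self j
  have hainv : a⁻¹ = a := cs.inv_simple i
  have hbinv : b⁻¹ = b := cs.inv_simple j
  induction m generalizing p with
  | zero => simp
  | succ m ih =>
    obtain ⟨u, e⟩ := p
    rw [pow_succ, Equiv.Perm.mul_apply]
    have step : (csEta cs i * csEta cs j) (u, e) =
        (a * (b * u * b) * a,
          e + ((if u = b then 1 else 0)
            + if u = (b * a) ^ 1 * b then (1:ZMod 2) else 0)) := by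
      rw [Equiv.Perm.mul_apply, csEta_apply, csEta_apply]
      simp only [← hadef, ← hbdef, Prod.mk.injEq, true_and, add_assoc]
      have hiff : (b * u * b = a) ↔ (u = (b * a) ^ 1 * b) := by
        rw [csAux_sandwich_iff b hb u a, pow_one]
      rw [hiff]
    rw [step, ih]
    have detect : ∀ k : ℕ, (a * (b * u * b) * a = (b * a) ^ k * b)
        ↔ (u = (b * a) ^ (k + 2) * b) := by
      intro k
      have key2 : b * (a * ((b*a)^k * b) * a) * b = (b*a)^(k+2) * b := by
        have h1 : b * (a * ((b*a)^k * b) * a) * b = (b*a) * (b*a)^k * ((b*a) * b) := by group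
        rw [h1, ← pow_succ', ← mul_assoc, ← pow_succ]
      rw [csAux_sandwich_iff a ha _ _, csAux_sandwich_iff b hb _ _, key2]
    simp only [Prod.mk.injEq]
    constructor
    · have h1 : (a*b)^(m+1) = (a*b)^m * (a*b) := pow_succ _ _
      rw [h1, mul_inv_rev ((a*b)^m), mul_inv_rev a b, hainv, hbinv]
      group
    · have hsum : ∀ k ∈ Finset.range (2*m),
          (if a * (b * u * b) * a = (b * a) ^ k * b then (1:ZMod 2) else 0)
            = (if u = (b * a) ^ (k + 1 + 1) * b then (1:ZMod 2) else 0) := by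
        intro k _
        exact if_congr (detect k) rfl rfl
      rw [Finset.sum_congr rfl hsum]
      have h2 : 2 * (m+1) = (2*m + 1) + 1 := by ring
      rw [h2, Finset.sum_range_succ', Finset.sum_range_succ']
      simp only [zero_add, pow_zero, one_mul, pow_one]
      ring

open Classical in
lemma csIsLiftable_eta : M.IsLiftable (csEta cs) := by
  intro i j
  apply Equiv.ext
  intro p
  rw [csEta_mul_pow_apply]
  rcases Nat.eq_zero_or_pos (M i j) with h0 | hpos
  · simp [h0]
  · have hp : (cs.simple i * cs.simple j) ^ (M i j) = 1 := cs.simple_mul_simple_pow i j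
    have hq : (cs.simple j * cs.simple i) ^ (M i j) = 1 := cs.simple_mul_simple_pow' i j
    obtain ⟨u, e⟩ := p
    have hsum : ∑ k ∈ Finset.range (2 * M i j),
        (if u = (cs.simple j * cs.simple i) ^ k * cs.simple j then (1:ZMod 2) else 0) = 0 := by
      have h2 : 2 * M i j = M i j + M i j := by ring
      rw [h2, Finset.sum_range_add]
      have : ∀ k ∈ Finset.range (M i j),
          (if u = (cs.simple j * cs.simple i) ^ (M i j + k) * cs.simple j then (1:ZMod 2) else 0)
          = if u = (cs.simple j * cs.simple i) ^ k * cs.simple j then (1:ZMod 2) else 0 := by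
        intro k _
        have : (cs.simple j * cs.simple i) ^ (M i j + k)
            = (cs.simple j * cs.simple i) ^ k := by
          rw [pow_add, hq, one_mul]
        rw [this]
      rw [Finset.sum_congr rfl this]
      exact CharTwo.add_self_eq_zero _
    rw [hsum, hp, add_zero]
    simp

/-- The homomorphism from `W` to permutations of `W × ZMod 2`. -/
noncomputable def csPhi : W →* Equiv.Perm (W × ZMod 2) :=
  cs.lift ⟨csEta cs, csIsLiftable_eta cs⟩

lemma csPhi_simple (i : B) : csPhi cs (cs.simple i) = csEta cs i :=
  cs.lift_apply_simple (csIsLiftable_eta cs) i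

open Classical in
lemma csPhi_wordProd (ω : List B) (p : W × ZMod 2) :
    csPhi cs (cs.wordProd ω) p =
      (cs.wordProd ω * p.1 * (cs.wordProd ω)⁻¹,
        p.2 + (List.count p.1 (cs.rightInvSeq ω) : ZMod 2)) := by
  induction ω generalizing p with
  | nil => simp [rightInvSeq]
  | cons i ω ih =>
    obtain ⟨u, e⟩ := p
    rw [cs.wordProd_cons, map_mul, Equiv.Perm.mul_apply, ih, csPhi_simple, csEta_apply]
    simp only [rightInvSeq]
    rw [List.count_cons]
    have hcond : (cs.wordProd ω * u * (cs.wordProd ω)⁻¹ = cs.simple i)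
        ↔ (u = (cs.wordProd ω)⁻¹ * cs.simple i * cs.wordProd ω) := by
      constructor
      · intro h; rw [← h]; group
      · intro h; rw [h]; group
    simp only [Prod.mk.injEq]
    constructor
    · rw [mul_inv_rev, cs.inv_simple]
      group
    · by_cases hc : u = (cs.wordProd ω)⁻¹ * cs.simple i * cs.wordProd ω
      · rw [if_pos (hcond.mpr hc), if_pos (beq_iff_eq.mpr hc.symm)]
        push_cast
        ring
      · rw [if_neg (fun h => hc (hcond.mp h)), if_neg (fun hb => hc (beq_iff_eq.mp hb).symm)]
        push_cast
        ring

open Classical in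
lemma csCount_ris_parity {ω ω' : List B} (h : cs.wordProd ω = cs.wordProd ω') (u : W) :
    ((List.count u (cs.rightInvSeq ω) : ZMod 2)) = (List.count u (cs.rightInvSeq ω') : ZMod 2) := by
  have h1 := csPhi_wordProd cs ω (u, 0)
  have h2 := csPhi_wordProd cs ω' (u, 0)
  rw [h] at h1
  rw [h1] at h2
  have := congrArg Prod.snd h2
  simpa using this


open Classical in
lemma cs_right_exchange {i : B} {ω : List B}
    (h : cs.length (cs.wordProd ω * cs.simple i) < cs.length (cs.wordProd ω)) :
    ∃ k, k < ω.length ∧ cs.wordProd ω * cs.simple i = cs.wordProd (ω.eraseIdx k) := by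
  obtain ⟨σ, hσred, hσ⟩ := cs.exists_reduced_word' (cs.wordProd ω * cs.simple i)
  have hω₀ : cs.wordProd (σ.concat i) = cs.wordProd ω := by
    rw [cs.wordProd_concat, ← hσ, cs.simple_mul_simple_cancel_right]
  have hcount0 : List.count (cs.simple i) (cs.rightInvSeq σ) = 0 := by
    rw [List.count_eq_zero]
    intro hmem
    have hinv := cs.isRightInversion_of_mem_rightInvSeq hσred hmem
    rw [← hσ] at hinv
    have := hinv.2
    rw [cs.simple_mul_simple_cancel_right] at this
    omega
  have hconj : (MulAut.conj (cs.simple i)) (cs.simple i) = cs.simple i := by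
    simp [MulAut.conj_apply]
  have hcount1 : List.count (cs.simple i) (cs.rightInvSeq (σ.concat i)) = 1 := by
    rw [cs.rightInvSeq_concat, List.concat_eq_append, List.count_append]
    have hmapcnt : List.count (cs.simple i)
        (List.map (⇑(MulAut.conj (cs.simple i))) (cs.rightInvSeq σ)) = 0 := by
      have hinj := (MulAut.conj (cs.simple i)).injective
      have := List.count_map_of_injective (cs.rightInvSeq σ)
        (⇑(MulAut.conj (cs.simple i))) hinj (cs.simple i)
      rw [hconj] at this
      rw [this, hcount0]
    rw [hmapcnt, List.count_singleton]
    simp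
  have hpar := csCount_ris_parity cs hω₀.symm (cs.simple i)
  rw [hcount1] at hpar
  have hne : List.count (cs.simple i) (cs.rightInvSeq ω) ≠ 0 := by
    intro h0
    rw [h0] at hpar
    simp at hpar
  have hmem : cs.simple i ∈ cs.rightInvSeq ω := by
    by_contra hmem
    exact hne (List.count_eq_zero.mpr hmem)
  obtain ⟨k, hk, hget⟩ := List.getElem_of_mem hmem
  have hklt : k < ω.length := by
    have := cs.length_rightInvSeq ω
    omega
  refine ⟨k, hklt, ?_⟩
  have hgetD : (cs.rightInvSeq ω).getD k 1 = cs.simple i := by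
    rw [List.getD_eq_getElem _ _ hk, hget]
  rw [← hgetD]
  exact cs.wordProd_mul_getD_rightInvSeq ω k


open Classical in
lemma csCount_lis_parity {ω ω' : List B} (h : cs.wordProd ω = cs.wordProd ω') (u : W) :
    ((List.count u (cs.leftInvSeq ω) : ZMod 2)) = (List.count u (cs.leftInvSeq ω') : ZMod 2) := by
  have h1 : ∀ τ : List B, List.count u (cs.leftInvSeq τ) = List.count u (cs.rightInvSeq τ.reverse) := by
    intro τ
    rw [cs.rightInvSeq_reverse, List.count_reverse]
  rw [h1, h1]
  apply csCount_ris_parity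
  rw [cs.wordProd_reverse, cs.wordProd_reverse, h]

lemma cs_leftInvSeq_cons (i : B) (ω : List B) :
    cs.leftInvSeq (i :: ω) = cs.simple i ::
      List.map (⇑(MulAut.conj (cs.simple i))) (cs.leftInvSeq ω) := rfl

open Classical in
lemma cs_left_exchange {i : B} {ω : List B}
    (h : cs.length (cs.simple i * cs.wordProd ω) < cs.length (cs.wordProd ω)) :
    ∃ k, k < ω.length ∧ cs.simple i * cs.wordProd ω = cs.wordProd (ω.eraseIdx k) := by
  obtain ⟨τ, hτred, hτ⟩ := cs.exists_reduced_word' (cs.simple i * cs.wordProd ω)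
  have hω₀ : cs.wordProd (i :: τ) = cs.wordProd ω := by
    rw [cs.wordProd_cons, ← hτ, cs.simple_mul_simple_cancel_left]
  have hcount0 : List.count (cs.simple i) (cs.leftInvSeq τ) = 0 := by
    rw [List.count_eq_zero]
    intro hmem
    have hinv := cs.isLeftInversion_of_mem_leftInvSeq hτred hmem
    rw [← hτ] at hinv
    have := hinv.2
    rw [cs.simple_mul_simple_cancel_left] at this
    omega
  have hconj : (MulAut.conj (cs.simple i)) (cs.simple i) = cs.simple i := by
    simp [MulAut.conj_apply]
  have hcount1 : List.count (cs.simple i) (cs.leftInvSeq (i :: τ)) = 1 := by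
    rw [cs_leftInvSeq_cons, List.count_cons]
    have hmapcnt : List.count (cs.simple i)
        (List.map (⇑(MulAut.conj (cs.simple i))) (cs.leftInvSeq τ)) = 0 := by
      have hinj := (MulAut.conj (cs.simple i)).injective
      have := List.count_map_of_injective (cs.leftInvSeq τ)
        (⇑(MulAut.conj (cs.simple i))) hinj (cs.simple i)
      rw [hconj] at this
      rw [this, hcount0]
    rw [hmapcnt]
    simp
  have hpar := csCount_lis_parity cs hω₀.symm (cs.simple i)
  rw [hcount1] at hpar
  have hne : List.count (cs.simple i) (cs.leftInvSeq ω) ≠ 0 := by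
    intro h0
    rw [h0] at hpar
    simp at hpar
  have hmem : cs.simple i ∈ cs.leftInvSeq ω := by
    by_contra hmem
    exact hne (List.count_eq_zero.mpr hmem)
  obtain ⟨k, hk, hget⟩ := List.getElem_of_mem hmem
  have hklt : k < ω.length := by
    have := cs.length_leftInvSeq ω
    omega
  refine ⟨k, hklt, ?_⟩
  have hgetD : (cs.leftInvSeq ω).getD k 1 = cs.simple i := by
    rw [List.getD_eq_getElem _ _ hk, hget]
  rw [← hgetD]
  exact cs.getD_leftInvSeq_mul_wordProd ω k


variable (J : Set B)

lemma cs_wordProd_mem {τ : List B} (hτ : ∀ i ∈ τ, i ∈ J) :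
    cs.wordProd τ ∈ Subgroup.closure (cs.simple '' J) := by
  induction τ with
  | nil => rw [cs.wordProd_nil]; exact Subgroup.one_mem _
  | cons i τ ih =>
    rw [cs.wordProd_cons]
    exact Subgroup.mul_mem _
      (Subgroup.subset_closure ⟨i, hτ i (List.mem_cons_self), rfl⟩)
      (ih (fun j hj => hτ j (List.mem_cons_of_mem i hj)))

lemma cs_exists_word_in {c : W} (hc : c ∈ Subgroup.closure (cs.simple '' J)) :
    ∃ τ : List B, (∀ i ∈ τ, i ∈ J) ∧ cs.wordProd τ = c := by
  induction hc using Subgroup.closure_induction with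
  | mem x hx =>
      obtain ⟨i, hi, rfl⟩ := hx
      exact ⟨[i], by simpa using hi, cs.wordProd_singleton i⟩
  | one => exact ⟨[], by simp, cs.wordProd_nil⟩
  | mul x y hx hy ihx ihy =>
      obtain ⟨τ, hτ, hτp⟩ := ihx
      obtain ⟨τ', hτ', hτ'p⟩ := ihy
      exact ⟨τ ++ τ', fun i hi => (List.mem_append.mp hi).elim (hτ i) (hτ' i),
        by rw [cs.wordProd_append, hτp, hτ'p]⟩
  | inv x hx ihx =>
      obtain ⟨τ, hτ, hτp⟩ := ihx
      exact ⟨τ.reverse, fun i hi => hτ i (List.mem_reverse.mp hi),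
        by rw [cs.wordProd_reverse, hτp]⟩

lemma cs_exists_reduced_word_in : ∀ n (τ : List B), τ.length = n → (∀ i ∈ τ, i ∈ J) →
    ∃ σ : List B, (∀ i ∈ σ, i ∈ J) ∧ cs.IsReduced σ ∧ cs.wordProd σ = cs.wordProd τ := by
  intro n
  induction n using Nat.strong_induction_on with
  | _ n ih =>
    intro τ hlen hτ
    by_cases hred : cs.IsReduced τ
    · exact ⟨τ, hτ, hred, rfl⟩
    · -- find a descent position
      have hne : ¬ (cs.length (cs.wordProd τ) = τ.length) := hred
      obtain ⟨k, hklt, hkdrop⟩ : ∃ k, k < τ.length ∧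
          cs.length (cs.wordProd (τ.take (k+1))) < cs.length (cs.wordProd (τ.take k)) := by
        by_contra hcon
        push_neg at hcon
        have hstep : ∀ k, k < τ.length →
            cs.length (cs.wordProd (τ.take (k+1))) = cs.length (cs.wordProd (τ.take k)) + 1 := by
          intro k hk
          have htake : τ.take (k+1) = τ.take k ++ [τ.get ⟨k, hk⟩] := by
            rw [← List.take_concat_get hk, List.concat_eq_append]
            simp [List.get_eq_getElem]
          have := cs.length_mul_simple (cs.wordProd (τ.take k)) (τ.get ⟨k, hk⟩)
          have hge := hcon k hk
          rw [htake, cs.wordProd_append, cs.wordProd_singleton] at hge ⊢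
          omega
        have hall : ∀ k, k ≤ τ.length → cs.length (cs.wordProd (τ.take k)) = k := by
          intro k
          induction k with
          | zero => intro _; simp
          | succ k ihk =>
            intro hk
            rw [hstep k (by omega), ihk (by omega)]
        have := hall τ.length (le_refl _)
        rw [List.take_length] at this
        exact hne this
      have htake : τ.take (k+1) = τ.take k ++ [τ.get ⟨k, hklt⟩] := by
        rw [← List.take_concat_get hklt, List.concat_eq_append]
        simp [List.get_eq_getElem]
      rw [htake, cs.wordProd_append, cs.wordProd_singleton] at hkdrop
      obtain ⟨l, hllt, hlex⟩ := cs_right_exchange cs hkdrop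
      set τ' := (τ.take k).eraseIdx l ++ τ.drop (k+1) with hτ'def
      have hτ'prod : cs.wordProd τ' = cs.wordProd τ := by
        rw [hτ'def, cs.wordProd_append, ← hlex]
        conv_rhs => rw [← List.take_append_drop (k+1) τ]
        rw [cs.wordProd_append, htake, cs.wordProd_append, cs.wordProd_singleton]
      have hlentake : (τ.take k).length = k := by
        rw [List.length_take]; omega
      have hτ'len : τ'.length < n := by
        rw [hτ'def, List.length_append]
        have h1 : ((τ.take k).eraseIdx l).length + 1 = (τ.take k).length :=
          List.length_eraseIdx_add_one (by omega)
        have h2 : (τ.drop (k+1)).length = τ.length - (k+1) := List.length_drop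
        omega
      have hτ'J : ∀ i ∈ τ', i ∈ J := by
        intro i hi
        rcases List.mem_append.mp hi with h | h
        · exact hτ i (List.take_subset _ _ (List.eraseIdx_subset h))
        · exact hτ i (List.drop_subset _ _ h)
      obtain ⟨σ, hσJ, hσred, hσprod⟩ := ih τ'.length (by omega) τ' rfl hτ'J
      exact ⟨σ, hσJ, hσred, by rw [hσprod, hτ'prod]⟩


/-- Every nontrivial element of a standard parabolic subgroup has a left descent in `J`. -/
lemma cs_exists_descent_in {c : W} (hc : c ∈ Subgroup.closure (cs.simple '' J)) (hne : c ≠ 1) :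
    ∃ i ∈ J, cs.simple i * c ∈ Subgroup.closure (cs.simple '' J) ∧
      cs.length (cs.simple i * c) < cs.length c := by
  obtain ⟨τ, hτJ, hτp⟩ := cs_exists_word_in cs J hc
  obtain ⟨σ, hσJ, hσred, hσp⟩ := cs_exists_reduced_word_in cs J τ.length τ rfl hτJ
  rw [hτp] at hσp
  cases σ with
  | nil => exact absurd (by rw [← hσp, cs.wordProd_nil]) hne
  | cons i σ' =>
    refine ⟨i, hσJ i (List.mem_cons_self), ?_, ?_⟩
    · have : cs.simple i * c = cs.wordProd σ' := by
        rw [← hσp, cs.wordProd_cons, cs.simple_mul_simple_cancel_left]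
      rw [this]
      exact cs_wordProd_mem cs J (fun j hj => hσJ j (List.mem_cons_of_mem i hj))
    · have h1 : cs.simple i * c = cs.wordProd σ' := by
        rw [← hσp, cs.wordProd_cons, cs.simple_mul_simple_cancel_left]
      have h2 : cs.length c = σ'.length + 1 := by
        rw [← hσp, hσred]
        simp
      have h3 : cs.length (cs.wordProd σ') ≤ σ'.length := cs.length_wordProd_le σ'
      rw [h1]
      omega

/-- Existence of a minimal-length representative in the coset `W_J b`. -/
lemma cs_exists_min_rep (b : W) : ∃ b0 : W,
    (∃ c ∈ Subgroup.closure (cs.simple '' J), b = c * b0) ∧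
    (∀ c ∈ Subgroup.closure (cs.simple '' J), cs.length b0 ≤ cs.length (c * b0)) := by
  set S : Set W := {x | ∃ c ∈ Subgroup.closure (cs.simple '' J), c * x = b} with hS
  have hbS : b ∈ S := ⟨1, Subgroup.one_mem _, one_mul b⟩
  have hNe : (cs.length '' S).Nonempty := ⟨cs.length b, b, hbS, rfl⟩
  obtain ⟨b0, hb0S, hb0len⟩ := Nat.sInf_mem hNe
  obtain ⟨c0, hc0, hc0b⟩ := hb0S
  refine ⟨b0, ⟨c0, hc0, hc0b.symm⟩, ?_⟩
  intro c hc
  have hmem : c * b0 ∈ S := ⟨c0 * c⁻¹, Subgroup.mul_mem _ hc0 (Subgroup.inv_mem _ hc), by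
    rw [mul_assoc, ← mul_assoc c⁻¹ c b0, inv_mul_cancel, one_mul, hc0b]⟩
  rw [hb0len]
  exact Nat.sInf_le ⟨c * b0, hmem, rfl⟩

/-- Length additivity over a minimal coset representative. -/
lemma cs_length_min_rep_add {b0 : W}
    (hmin : ∀ c ∈ Subgroup.closure (cs.simple '' J), cs.length b0 ≤ cs.length (c * b0)) :
    ∀ n (c : W), cs.length c = n → c ∈ Subgroup.closure (cs.simple '' J) →
      cs.length (c * b0) = cs.length c + cs.length b0 := by
  intro n
  induction n using Nat.strong_induction_on with
  | _ n ih =>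
    intro c hlen hc
    by_cases hone : c = 1
    · rw [hone, one_mul, cs.length_one]; ring
    · obtain ⟨i, hiJ, hc', hlt⟩ := cs_exists_descent_in cs J hc hone
      set c' := cs.simple i * c with hc'def
      have hcc' : c = cs.simple i * c' := by
        rw [hc'def, cs.simple_mul_simple_cancel_left]
      have hlenc' : cs.length c' = cs.length c - 1 ∧ 1 ≤ cs.length c := by
        have := cs.length_simple_mul c i
        rw [← hc'def] at this
        constructor <;> omega
      have hihc' : cs.length (c' * b0) = cs.length c' + cs.length b0 :=
        ih (cs.length c') (by omega) c' rfl hc'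
      have hc'len2 : cs.length (cs.simple i * c') = cs.length c := by rw [← hcc']
      have hcase := cs.length_simple_mul (c' * b0) i
      rcases hcase with hplus | hminus
      · rw [hcc', mul_assoc, hplus, hihc']
        omega
      · -- impossible case
        exfalso
        have hlt2 : cs.length (cs.simple i * (c' * b0)) < cs.length (c' * b0) := by
          have hne2 := cs.length_simple_mul_ne (c' * b0) i
          omega
        -- reduced word for c' in J, and reduced word for b0
        obtain ⟨τ, hτJ, hτp⟩ := cs_exists_word_in cs J hc'
        obtain ⟨σ', hσ'J, hσ'red, hσ'p⟩ := cs_exists_reduced_word_in cs J τ.length τ rfl hτJ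
        rw [hτp] at hσ'p
        obtain ⟨β, hβlen, hβp⟩ := cs.exists_reduced_word b0
        have hωp : cs.wordProd (σ' ++ β) = c' * b0 := by
          rw [cs.wordProd_append, hσ'p, ← hβp]
        rw [← hωp] at hlt2
        obtain ⟨k, hklt, hkex⟩ := cs_left_exchange cs hlt2
        rw [hωp] at hkex
        rcases Nat.lt_or_ge k σ'.length with hkσ | hkσ
        · -- erasure in the `σ'` part: contradiction with length of c
          rw [List.eraseIdx_append_of_lt_length hkσ, cs.wordProd_append] at hkex
          have hceq : c * b0 = cs.wordProd (σ'.eraseIdx k) * b0 := by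
            rw [hcc', mul_assoc, hkex, ← hβp]
          have hcancel : c = cs.wordProd (σ'.eraseIdx k) := mul_right_cancel hceq
          have hlen1 : cs.length c ≤ (σ'.eraseIdx k).length := by
            rw [hcancel]; exact cs.length_wordProd_le _
          have hlen2 : (σ'.eraseIdx k).length + 1 = σ'.length :=
            List.length_eraseIdx_add_one hkσ
          have hlen3 : σ'.length = cs.length c' := by rw [← hσ'p]; exact hσ'red.symm
          omega
        · -- erasure in the `β` part: contradiction with minimality of b0
          rw [List.eraseIdx_append_of_length_le hkσ, cs.wordProd_append, hσ'p] at hkex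
          have hd : c'⁻¹ * (cs.simple i * c') ∈ Subgroup.closure (cs.simple '' J) := by
            exact Subgroup.mul_mem _ (Subgroup.inv_mem _ hc')
              (Subgroup.mul_mem _ (Subgroup.subset_closure ⟨i, hiJ, rfl⟩) hc')
          have heq2 : cs.wordProd (β.eraseIdx (k - σ'.length)) =
              (c'⁻¹ * (cs.simple i * c')) * b0 := by
            rw [show (c'⁻¹ * (cs.simple i * c')) * b0 = c'⁻¹ * (cs.simple i * (c' * b0)) by group,
              hkex, ← mul_assoc, inv_mul_cancel, one_mul]
          have hminle := hmin _ hd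
          rw [← heq2] at hminle
          have hlen4 : cs.length (cs.wordProd (β.eraseIdx (k - σ'.length)))
              ≤ (β.eraseIdx (k - σ'.length)).length := cs.length_wordProd_le _
          have hklt2 : k - σ'.length < β.length := by
            rw [List.length_append] at hklt
            omega
          have hlen5 : (β.eraseIdx (k - σ'.length)).length + 1 = β.length :=
            List.length_eraseIdx_add_one hklt2
          have hβlen' : cs.length b0 = β.length := by rw [hβp]; exact hβlen
          omega


/-- Length additivity over a representative with no left descents in `J`. -/
lemma cs_length_padd {c b : W} (hc : c ∈ Subgroup.closure (cs.simple '' J))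
    (hb : ∀ i ∈ J, cs.length (cs.simple i * b) > cs.length b) :
    cs.length (c * b) = cs.length c + cs.length b := by
  obtain ⟨b0, ⟨c0, hc0, hbc0⟩, hmin⟩ := cs_exists_min_rep cs J b
  have hbb0 : b = b0 := by
    by_cases hone : c0 = 1
    · rw [hbc0, hone, one_mul]
    · exfalso
      obtain ⟨i, hiJ, hc0', hlt0⟩ := cs_exists_descent_in cs J hc0 hone
      have h1 : cs.length ((cs.simple i * c0) * b0) = cs.length (cs.simple i * c0) + cs.length b0 :=
        cs_length_min_rep_add cs J hmin _ _ rfl hc0'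
      have h2 : cs.length (c0 * b0) = cs.length c0 + cs.length b0 :=
        cs_length_min_rep_add cs J hmin _ _ rfl hc0
      have h3 : cs.simple i * b = (cs.simple i * c0) * b0 := by
        rw [hbc0, mul_assoc]
      have h4 := hb i hiJ
      rw [h3, h1, ← hbc0.symm] at h4
      rw [h2] at h4
      omega
  rw [hbb0]
  exact cs_length_min_rep_add cs J (hbb0 ▸ hmin) _ _ rfl hc

/-- Uniqueness of the representative with no left descents in `J`. -/
lemma cs_jmin_unique {b b' c : W}
    (hb : ∀ i ∈ J, cs.length (cs.simple i * b) > cs.length b)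
    (hb' : ∀ i ∈ J, cs.length (cs.simple i * b') > cs.length b')
    (hc : c ∈ Subgroup.closure (cs.simple '' J)) (h : b' = c * b) : b' = b ∧ c = 1 := by
  have h1 : cs.length b' = cs.length c + cs.length b := by
    rw [h]; exact cs_length_padd cs J hc hb
  have h2 : cs.length b = cs.length c⁻¹ + cs.length b' := by
    have : b = c⁻¹ * b' := by rw [h, ← mul_assoc, inv_mul_cancel, one_mul]
    rw [this]
    exact cs_length_padd cs J (Subgroup.inv_mem _ hc) hb'
  rw [cs.length_inv] at h2
  have hc0 : cs.length c = 0 := by omega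
  have hcone : c = 1 := cs.length_eq_zero_iff.mp hc0
  exact ⟨by rw [h, hcone, one_mul], hcone⟩

/-- Deodhar's lemma. -/
lemma cs_deodhar {b : W}
    (hb : ∀ i ∈ J, cs.length (cs.simple i * b) > cs.length b) (j : B) :
    (∀ i ∈ J, cs.length (cs.simple i * (b * cs.simple j)) > cs.length (b * cs.simple j)) ∨
      (∃ i ∈ J, b * cs.simple j = cs.simple i * b) := by
  by_cases h1 : cs.length (b * cs.simple j) < cs.length b
  · left
    intro i hiJ
    have h2 : cs.length (b * cs.simple j) + 1 = cs.length b := by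
      have := cs.length_mul_simple b j
      omega
    have h3 : cs.length (cs.simple i * b) ≤ cs.length (cs.simple i * (b * cs.simple j)) + 1 := by
      have := cs.length_mul_simple (cs.simple i * (b * cs.simple j)) j
      have he : cs.simple i * (b * cs.simple j) * cs.simple j = cs.simple i * b := by
        rw [mul_assoc, cs.simple_mul_simple_cancel_right]
      rw [he] at this
      omega
    have h4 := hb i hiJ
    omega
  · by_cases h2 : ∀ i ∈ J, cs.length (cs.simple i * (b * cs.simple j)) > cs.length (b * cs.simple j)
    · exact Or.inl h2
    · right
      push_neg at h2
      obtain ⟨i, hiJ, hle⟩ := h2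
      have hlt : cs.length (cs.simple i * (b * cs.simple j)) < cs.length (b * cs.simple j) := by
        have := cs.length_simple_mul (b * cs.simple j) i
        have hne := cs.length_simple_mul_ne (b * cs.simple j) i
        omega
      obtain ⟨ω, hωlen, hωp⟩ := cs.exists_reduced_word b
      have hωred : cs.IsReduced ω := by
        unfold CoxeterSystem.IsReduced
        rw [← hωp]
        rw [hωp]; exact hωlen
      have hconc : cs.wordProd (ω ++ [j]) = b * cs.simple j := by
        rw [cs.wordProd_append, cs.wordProd_singleton, ← hωp]
      have hlt2 : cs.length (cs.simple i * cs.wordProd (ω ++ [j])) <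
          cs.length (cs.wordProd (ω ++ [j])) := by rw [hconc]; exact hlt
      obtain ⟨k, hklt, hkex⟩ := cs_left_exchange cs hlt2
      rw [hconc] at hkex
      rcases Nat.lt_or_ge k ω.length with hkω | hkω
      · exfalso
        rw [List.eraseIdx_append_of_lt_length hkω, cs.wordProd_append,
          cs.wordProd_singleton] at hkex
        have h5 : cs.simple i * b = cs.wordProd (ω.eraseIdx k) := by
          have := congrArg (fun x => x * cs.simple j) hkex
          rw [mul_assoc, cs.simple_mul_simple_cancel_right,
            cs.simple_mul_simple_cancel_right] at this
          exact this
        have h6 : cs.length (cs.simple i * b) ≤ (ω.eraseIdx k).length := by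
          rw [h5]; exact cs.length_wordProd_le _
        have h7 : (ω.eraseIdx k).length + 1 = ω.length := List.length_eraseIdx_add_one hkω
        have h8 := hb i hiJ
        have h9 : ω.length = cs.length b := by rw [hωp]; exact hωlen.symm
        omega
      · have hkeq : k = ω.length := by
          rw [List.length_append, List.length_singleton] at hklt
          omega
        have h10 : (ω ++ [j]).eraseIdx k = ω := by
          rw [hkeq, List.eraseIdx_append_of_length_le (le_refl _), Nat.sub_self]
          simp
        rw [h10, ← hωp] at hkex
        refine ⟨i, hiJ, ?_⟩
        have h11 := congrArg (fun x => cs.simple i * x) hkex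
        rw [cs.simple_mul_simple_cancel_left] at h11
        exact h11


lemma cs_main_aux : ∀ n (u v uJ uR vJ vR : W),
    IsParabolicFactorization cs J u uJ uR → IsParabolicFactorization cs J v vJ vR →
    cs.length (u⁻¹ * v) = n → cs.length (uJ⁻¹ * vJ) ≤ n := by
  intro n
  induction n using Nat.strong_induction_on with
  | _ n ih =>
    intro u v uJ uR vJ vR hu hv hlen
    obtain ⟨huJ, huR, huEq, huLen⟩ := hu
    obtain ⟨hvJ, hvR, hvEq, hvLen⟩ := hv
    by_cases heq : u⁻¹ * v = 1
    · have huv : u = v := by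
        have := congrArg (fun x => u * x) heq
        simp only [mul_one] at this
        rw [← mul_assoc, mul_inv_cancel, one_mul] at this
        exact this.symm
      have hc : vJ⁻¹ * uJ ∈ Subgroup.closure (cs.simple '' J) :=
        Subgroup.mul_mem _ (Subgroup.inv_mem _ hvJ) huJ
      have hrel : vR = (vJ⁻¹ * uJ) * uR := by
        have h0 : vJ * vR = uJ * uR := by rw [← hvEq, ← huEq, huv]
        calc vR = vJ⁻¹ * (vJ * vR) := by group
          _ = vJ⁻¹ * (uJ * uR) := by rw [h0]
          _ = (vJ⁻¹ * uJ) * uR := by group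
      obtain ⟨_, hcone⟩ := cs_jmin_unique cs J huR hvR hc hrel
      have hJeq : uJ⁻¹ * vJ = 1 := by
        have h2 := congrArg (fun x => vJ * x) hcone
        simp only [mul_one] at h2
        rw [← mul_assoc, mul_inv_cancel, one_mul] at h2
        rw [h2, inv_mul_cancel]
      rw [hJeq, cs.length_one]
      omega
    · obtain ⟨j, hj⟩ := cs.exists_rightDescent_of_ne_one heq
      have hj' : cs.length ((u⁻¹ * v) * cs.simple j) < cs.length (u⁻¹ * v) := hj
      have hv'l : u⁻¹ * (v * cs.simple j) = (u⁻¹ * v) * cs.simple j := by rw [mul_assoc]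
      have hlt : cs.length (u⁻¹ * (v * cs.simple j)) < n := by
        rw [hv'l, ← hlen]
        exact hj'
      rcases cs_deodhar cs J hvR j with hmin' | ⟨i, hiJ, hswap⟩
      · have hv'eq : v * cs.simple j = vJ * (vR * cs.simple j) := by
          rw [hvEq, mul_assoc]
        have hv' : IsParabolicFactorization cs J (v * cs.simple j) vJ (vR * cs.simple j) :=
          ⟨hvJ, hmin', hv'eq, by rw [hv'eq]; exact cs_length_padd cs J hvJ hmin'⟩
        have hIH := ih _ hlt u (v * cs.simple j) uJ uR vJ (vR * cs.simple j)
          ⟨huJ, huR, huEq, huLen⟩ hv' rfl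
        omega
      · have hv'eq : v * cs.simple j = (vJ * cs.simple i) * vR := by
          rw [hvEq, mul_assoc, hswap, ← mul_assoc]
        have hmem : vJ * cs.simple i ∈ Subgroup.closure (cs.simple '' J) :=
          Subgroup.mul_mem _ hvJ (Subgroup.subset_closure ⟨i, hiJ, rfl⟩)
        have hv' : IsParabolicFactorization cs J (v * cs.simple j) (vJ * cs.simple i) vR :=
          ⟨hmem, hvR, hv'eq, by rw [hv'eq]; exact cs_length_padd cs J hmem hvR⟩
        have hIH := ih _ hlt u (v * cs.simple j) uJ uR (vJ * cs.simple i) vR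
          ⟨huJ, huR, huEq, huLen⟩ hv' rfl
        have ha : uJ⁻¹ * vJ = (uJ⁻¹ * (vJ * cs.simple i)) * cs.simple i := by
          rw [mul_assoc, mul_assoc, cs.simple_mul_simple_self, mul_one]
        have hb2 : cs.length (uJ⁻¹ * vJ) ≤ cs.length (uJ⁻¹ * (vJ * cs.simple i)) + 1 := by
          rw [ha]
          have := cs.length_mul_simple (uJ⁻¹ * (vJ * cs.simple i)) i
          omega
        omega

end ParabolicAux

/-- With the word metric `d(u,v) = ℓ(u⁻¹ v)` on a finite Coxeter group, the parabolic
projection `w ↦ w_J` is 1-Lipschitz: `d(u_J, v_J) ≤ d(u, v)`. -/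
theorem parabolic_projection_lipschitz {B : Type*} {W : Type*} [Group W] [Finite W]
    {M : CoxeterMatrix B} (cs : CoxeterSystem M W) (J : Set B)
    (u v uJ uR vJ vR : W)
    (hu : IsParabolicFactorization cs J u uJ uR)
    (hv : IsParabolicFactorization cs J v vJ vR) :
    cs.length (uJ⁻¹ * vJ) ≤ cs.length (u⁻¹ * v) :=
  cs_main_aux cs J (cs.length (u⁻¹ * v)) u v uJ uR vJ vR hu hv rfl
end

section
/- Let w ∈ S_n and i ∈ {1,…,n−1}, and let u be the permutation obtained by listing the values 1,…,i in their relative order in w followed by the values i+1,…,n in their relative order in w. Then ℓ(u) ≤ ℓ(w) and u ≤ w in the right weak order, where ℓ is the number of inversions. -/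
open scoped Classical

/-- `u` is obtained from `w ∈ S_n` by listing first the values `< i` in the relative
order in which they appear in the one-line notation of `w`, followed by the values `≥ i`
in their relative order in `w`. -/
def IsBlockSort {n : ℕ} (i : ℕ) (w u : Equiv.Perm (Fin n)) : Prop :=
  (∀ p : Fin n, (p : ℕ) < i ↔ (u p : ℕ) < i) ∧
  (∀ a b : Fin n, (((a : ℕ) < i ∧ (b : ℕ) < i) ∨ (i ≤ (a : ℕ) ∧ i ≤ (b : ℕ))) →
    (u.symm a < u.symm b ↔ w.symm a < w.symm b))

/-- The number of inversions of a permutation of `Fin n`. -/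
noncomputable def invNum {n : ℕ} (w : Equiv.Perm (Fin n)) : ℕ :=
  (Finset.univ.filter (fun p : Fin n × Fin n => p.1 < p.2 ∧ w p.2 < w p.1)).card

/-- Value-based inversion set. -/
noncomputable def valInv {n : ℕ} (σ : Equiv.Perm (Fin n)) : Finset (Fin n × Fin n) :=
  Finset.univ.filter (fun p : Fin n × Fin n => p.1 < p.2 ∧ σ⁻¹ p.2 < σ⁻¹ p.1)

lemma invNum_eq_valInv {n : ℕ} (σ : Equiv.Perm (Fin n)) :
    invNum σ = (valInv σ).card := by
  unfold invNum valInv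
  apply Finset.card_nbij' (fun p => (σ p.2, σ p.1)) (fun p => (σ⁻¹ p.2, σ⁻¹ p.1))
  · intro p hp
    simp only [Finset.mem_filter, Finset.mem_univ, true_and, Finset.mem_coe] at hp ⊢
    simp only [Equiv.Perm.inv_def, Equiv.symm_apply_apply]
    exact ⟨hp.2, hp.1⟩
  · intro p hp
    simp only [Finset.mem_filter, Finset.mem_univ, true_and, Finset.mem_coe] at hp ⊢
    simp only [Equiv.Perm.inv_def, Equiv.apply_symm_apply]
    exact ⟨hp.2, hp.1⟩
  · intro p _; simp
  · intro p _; simp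

/-- If `u` lists the values `1,…,i` in their relative order in `w` followed by the values
`i+1,…,n` in their relative order in `w`, then `ℓ(u) ≤ ℓ(w)` and `u ≤ w` in right weak
order, where `ℓ` is the inversion number. -/
theorem blockSort_le_weak_order {n i : ℕ} (hi0 : 0 < i) (hin : i < n)
    (w u : Equiv.Perm (Fin n)) (hu : IsBlockSort i w u) :
    invNum u ≤ invNum w ∧ invNum u + invNum (u⁻¹ * w) = invNum w := by
  obtain ⟨hu1, hu2⟩ := hu
  -- the block condition for values: value a lies below i iff its position in u does
  have hval : ∀ a : Fin n, ((u⁻¹ a : Fin n) : ℕ) < i ↔ (a : ℕ) < i := by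
    intro a
    have := hu1 (u⁻¹ a)
    simpa using this
  -- Claim 1 : valInv u ⊆ valInv w
  have hsub : valInv u ⊆ valInv w := by
    intro p hp
    simp only [valInv, Finset.mem_filter, Finset.mem_univ, true_and] at hp ⊢
    obtain ⟨hab, hinv⟩ := hp
    refine ⟨hab, ?_⟩
    rcases lt_or_ge (p.1 : ℕ) i with h1 | h1 <;> rcases lt_or_ge (p.2 : ℕ) i with h2 | h2
    · -- both low
      have h := hu2 p.1 p.2 (Or.inl ⟨h1, h2⟩)
      have hne : w⁻¹ p.1 ≠ w⁻¹ p.2 := fun e => absurd (w⁻¹.injective e) (ne_of_lt hab)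
      have : ¬ (w.symm p.1 < w.symm p.2) := by
        rw [← h]
        exact fun hc => absurd hinv (not_lt_of_gt hc)
      exact lt_of_le_of_ne (le_of_not_gt this) (Ne.symm hne)
    · -- p.1 low, p.2 high : impossible with hinv
      exfalso
      have ha : ((u⁻¹ p.1 : Fin n) : ℕ) < i := (hval p.1).2 h1
      have hb : ¬ ((u⁻¹ p.2 : Fin n) : ℕ) < i := fun hc => absurd ((hval p.2).1 hc) (not_lt_of_ge h2)
      exact hb (lt_trans (show ((u⁻¹ p.2 : Fin n) : ℕ) < ((u⁻¹ p.1 : Fin n) : ℕ) from hinv) ha)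
    · -- p.1 high, p.2 low : contradicts p.1 < p.2
      exact absurd (lt_of_lt_of_le h2 h1) (not_lt_of_gt hab)
    · -- both high
      have h := hu2 p.1 p.2 (Or.inr ⟨h1, h2⟩)
      have hne : w⁻¹ p.1 ≠ w⁻¹ p.2 := fun e => absurd (w⁻¹.injective e) (ne_of_lt hab)
      have : ¬ (w.symm p.1 < w.symm p.2) := by
        rw [← h]
        exact fun hc => absurd hinv (not_lt_of_gt hc)
      exact lt_of_le_of_ne (le_of_not_gt this) (Ne.symm hne)
  -- Claim 2 : bijection between valInv (u⁻¹ * w) and valInv w \ valInv u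
  have hbij : (valInv (u⁻¹ * w)).card = (valInv w \ valInv u).card := by
    apply Finset.card_nbij' (fun p => (u p.1, u p.2)) (fun p => (u⁻¹ p.1, u⁻¹ p.2))
    · intro p hp
      simp only [valInv, Finset.mem_filter, Finset.mem_univ, true_and, Finset.mem_sdiff,
        not_and, not_lt, Finset.mem_coe] at hp ⊢
      obtain ⟨hcd, hinv⟩ := hp
      have hinv' : w⁻¹ (u p.2) < w⁻¹ (u p.1) := by
        have : ∀ x, (u⁻¹ * w)⁻¹ x = w⁻¹ (u x) := fun x => by
          simp [Equiv.Perm.mul_apply]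
        rwa [this, this] at hinv
      have hlt : u p.1 < u p.2 := by
        rcases lt_trichotomy (u p.1) (u p.2) with h | h | h
        · exact h
        · exact absurd (u.injective h) (ne_of_lt hcd)
        · -- then (u p.2, u p.1) ∈ valInv u ⊆ valInv w, contradiction
          exfalso
          have hmem : (u p.2, u p.1) ∈ valInv u := by
            simp only [valInv, Finset.mem_filter, Finset.mem_univ, true_and]
            exact ⟨h, by simpa using hcd⟩
          have := hsub hmem
          simp only [valInv, Finset.mem_filter, Finset.mem_univ, true_and] at this
          exact absurd this.2 (not_lt_of_gt hinv')
      refine ⟨⟨hlt, hinv'⟩, fun _ => ?_⟩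
      simpa using le_of_lt hcd
    · intro p hp
      simp only [valInv, Finset.mem_filter, Finset.mem_univ, true_and, Finset.mem_sdiff,
        not_and, not_lt, Finset.mem_coe] at hp ⊢
      obtain ⟨⟨hab, hinv⟩, hnot⟩ := hp
      have h1 : u⁻¹ p.1 ≤ u⁻¹ p.2 := hnot hab
      have h2 : u⁻¹ p.1 ≠ u⁻¹ p.2 := fun e => absurd (u⁻¹.injective e) (ne_of_lt hab)
      refine ⟨lt_of_le_of_ne h1 h2, ?_⟩
      have : ∀ x, (u⁻¹ * w)⁻¹ (u⁻¹ x) = w⁻¹ x := fun x => by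
        simp [Equiv.Perm.mul_apply]
      rw [this, this]
      exact hinv
    · intro p _; simp
    · intro p _; simp
  have key : invNum u + invNum (u⁻¹ * w) = invNum w := by
    rw [invNum_eq_valInv, invNum_eq_valInv, invNum_eq_valInv, hbij, add_comm]
    exact Finset.card_sdiff_add_card_eq_card hsub
  exact ⟨key ▸ Nat.le_add_right _ _, key⟩
end

section
/- For a finite Coxeter system (W,S) with a fixed Coxeter element c and s ∈ S initial in c (i.e. ℓ(sc) < ℓ(c)), if w is c-sortable and w ≥ s in weak order, then sw is scs-sortable; and if w is c-sortable with w ≱ s, then w lies in W_{⟨s⟩} := ⟨S \ {s}⟩ and w is sc-sortable as an element of W_{⟨s⟩}. -/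
open scoped Classical

/-- `w` is `c`-sortable with respect to the reduced word `l` of the Coxeter element `c`:
`w` has a reduced word of the form `c_{K₁} c_{K₂} ⋯` where `K₁ ⊇ K₂ ⊇ ⋯` is a weakly
decreasing sequence of sets of letters and `c_K` is the subword of `l` using the letters
in `K`.  (Equivalently, the `c`-sorting word of `w`, the lexicographically first reduced
subword of `c^∞` for `w`, defines a weakly decreasing sequence of subsets of positions.) -/
def IsSortable {B : Type*} {W : Type*} [Group W] {M : CoxeterMatrix B} [DecidableEq B]
    (cs : CoxeterSystem M W) (l : List B) (w : W) : Prop :=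
  ∃ K : List (Finset B), K.Chain' (fun A C => C ⊆ A) ∧
    w = cs.wordProd (K.map (fun A => l.filter (· ∈ A))).flatten ∧
    cs.length w = ((K.map (fun A => l.filter (· ∈ A))).flatten).length

noncomputable section
namespace SortAux

open List CoxeterSystem Real

variable {B : Type*} {W : Type*} [Group W] {M : CoxeterMatrix B} (cs : CoxeterSystem M W)

local prefix:100 "s" => cs.simple
local prefix:100 "π" => cs.wordProd

theorem prod_map_alternatingWord {G : Type*} [Monoid G] (f : B → G) (i i' : B) (m : ℕ) :
    ((alternatingWord i i' (2 * m)).map f).prod = (f i * f i') ^ m := by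
  induction m with
  | zero => simp [alternatingWord]
  | succ m ih =>
      have h2 : 2 * (m + 1) = (2 * m + 1) + 1 := by ring
      rw [h2, alternatingWord_succ', alternatingWord_succ']
      have he : ¬ Even (2 * m + 1) := by simp [Nat.even_add_one]
      have he2 : Even (2 * m) := even_two_mul m
      simp only [he, he2, if_neg, if_pos, if_true, if_false]
      rw [map_cons, map_cons, prod_cons, prod_cons, ih, pow_succ']
      rw [mul_assoc]

theorem leftInvSeq_cons (i : B) (ω : List B) :
    cs.leftInvSeq (i :: ω) = s i :: (cs.leftInvSeq ω).map (MulAut.conj (s i)) := rfl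

private theorem range_add_two (n : ℕ) :
    List.range (n + 2) = 0 :: 1 :: (List.range n).map (· + 2) := by
  rw [List.range_succ_eq_map, List.range_succ_eq_map, List.map_cons, List.map_map]
  refine congrArg _ (congrArg _ ?_)
  refine List.map_congr_left fun a _ => ?_
  simp only [Function.comp_apply, Nat.succ_eq_add_one]

theorem leftInvSeq_alternatingWord (i i' : B) (m : ℕ) :
    cs.leftInvSeq (alternatingWord i i' (2 * m)) =
      (List.range (2 * m)).map (fun l => (s i * s i') ^ l * s i) := by
  induction m with
  | zero => simp [alternatingWord]
  | succ m ih =>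
      have h2 : 2 * (m + 1) = (2 * m + 1) + 1 := by ring
      have he : ¬ Even (2 * m + 1) := by simp [Nat.even_add_one]
      have he2 : Even (2 * m) := even_two_mul m
      rw [h2, alternatingWord_succ', alternatingWord_succ']
      simp only [he, he2, if_neg, if_pos, if_true, if_false]
      rw [leftInvSeq_cons, leftInvSeq_cons, ih]
      have h3 : 2 * m + 1 + 1 = 2 * m + 2 := by omega
      rw [h3, range_add_two]
      simp only [List.map_cons, List.map_map]
      congr 1
      · simp
      congr 1
      · simp only [MulAut.conj_apply, pow_one, cs.inv_simple]
  -- remaining : map equality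
      refine List.map_congr_left fun a _ => ?_
      simp only [Function.comp_apply, MulAut.conj_apply, cs.inv_simple]
      rw [pow_succ, pow_succ']
      simp only [mul_assoc]

/-! ### The reflection cocycle via a semidirect product -/

/-- functions from `W` to `ZMod 2`, multiplicatively -/
abbrev AW (W : Type*) := W → Multiplicative (ZMod 2)

variable (W) in
/-- conjugation action of `W` on `AW W` -/
def conjAut (w : W) : MulAut (AW W) where
  toFun f := fun t => f (w⁻¹ * t * w)
  invFun f := fun t => f (w * t * w⁻¹)
  left_inv f := by funext t; simp [mul_assoc]
  right_inv f := by funext t; simp [mul_assoc]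
  map_mul' f g := rfl

variable (W) in
/-- conjugation action as a homomorphism -/
def conjHom : W →* MulAut (AW W) where
  toFun := conjAut W
  map_one' := by
    refine MulEquiv.ext fun f => funext fun t => ?_
    simp [conjAut]
  map_mul' u v := by
    refine MulEquiv.ext fun f => funext fun t => ?_
    simp [conjAut, mul_assoc]

variable (W) in
/-- the group receiving the cocycle representation -/
abbrev Gr := AW W ⋊[conjHom W] W

/-- indicator function -/
def ind (x : W) : AW W := fun t => if t = x then Multiplicative.ofAdd 1 else 1

/-- the cocycle representation of the generators -/
def sg (j : B) : Gr W := ⟨ind (s j), s j⟩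

/-- the count function associated to a word -/
def cf (ω : List B) : AW W :=
  fun t => Multiplicative.ofAdd (((cs.leftInvSeq ω).countP (· = t) : ℕ) : ZMod 2)

theorem simple_conj_cancel (j : B) (x : W) : s j * (s j * x * s j) * s j = x := by
  simp [mul_assoc, cs.simple_mul_simple_cancel_left, cs.simple_mul_simple_self]

theorem prod_map_sg (ω : List B) : ((ω.map (sg cs)).prod : Gr W) = ⟨cf cs ω, π ω⟩ := by
  induction ω with
  | nil =>
      refine SemidirectProduct.ext ?_ ?_
      · funext t
        simp [cf, leftInvSeq_nil]
      · simp
  | cons j ω ih =>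
      rw [List.map_cons, List.prod_cons, ih]
      refine SemidirectProduct.ext ?_ ?_
      · show ind (s j) * (conjHom W) (s j) (cf cs ω) = cf cs (j :: ω)
        funext t
        show ind (s j) t * cf cs ω ((s j)⁻¹ * t * s j) = cf cs (j :: ω) t
        rw [cs.inv_simple]
        simp only [cf, ind, leftInvSeq_cons]
        rw [List.countP_cons, List.countP_map]
        have hc : List.countP ((fun u => decide (u = t)) ∘ ⇑(MulAut.conj (s j)))
            (cs.leftInvSeq ω) = List.countP (· = (s j * t * s j)) (cs.leftInvSeq ω) := by
          refine List.countP_congr fun u _ => ?_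
          simp only [Function.comp_apply]
          simp only [decide_eq_true_eq]
          rw [MulAut.conj_apply, cs.inv_simple]
          constructor
          · rintro rfl
            exact (simple_conj_cancel cs j u).symm
          · rintro rfl
            exact simple_conj_cancel cs j t
        rw [hc]
        simp only [decide_eq_true_eq]
        have hind : (if t = s j then Multiplicative.ofAdd (1 : ZMod 2) else 1)
            = Multiplicative.ofAdd (((if s j = t then 1 else 0 : ℕ) : ZMod 2)) := by
          by_cases h : t = s j
          · simp [h]
          · rw [if_neg h, if_neg fun hh => h hh.symm]
            simp
        rw [hind, ← ofAdd_add]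
        congr 1
        push_cast
        ring
      · show s j * π ω = π (j :: ω)
        rw [cs.wordProd_cons]

theorem sg_liftable : M.IsLiftable (sg cs) := by
  intro j k
  have h1 := prod_map_alternatingWord (sg cs) j k (M j k)
  rw [← h1, prod_map_sg]
  have hpow : (s j * s k) ^ M j k = 1 := cs.simple_mul_simple_pow j k
  refine SemidirectProduct.ext ?_ ?_
  · show cf cs (alternatingWord j k (2 * M j k)) = 1
    funext t
    show Multiplicative.ofAdd _ = 1
    rw [leftInvSeq_alternatingWord cs j k (M j k)]
    have h2 : 2 * M j k = M j k + M j k := by ring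
    rw [h2, List.range_add, List.map_append, List.countP_append]
    have h3 : List.countP (fun x => decide (x = t))
          (((List.range (M j k)).map (M j k + ·)).map (fun l => (s j * s k) ^ l * s j))
        = List.countP (fun x => decide (x = t))
          ((List.range (M j k)).map (fun l => (s j * s k) ^ l * s j)) := by
      rw [List.map_map, List.countP_map, List.countP_map]
      refine List.countP_congr fun l _ => ?_
      simp only [Function.comp_apply, decide_eq_true_eq]
      rw [pow_add, hpow, one_mul]
    rw [h3, ← ofAdd_zero]
    congr 1
    push_cast
    ring_nf
    rw [show (2 : ZMod 2) = 0 from rfl, mul_zero]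
  · show π (alternatingWord j k (2 * M j k)) = 1
    have h2 := prod_map_alternatingWord cs.simple j k (M j k)
    have h3 : π (alternatingWord j k (2 * M j k))
        = ((alternatingWord j k (2 * M j k)).map cs.simple).prod := rfl
    rw [h3, h2, hpow]

/-- the cocycle representation -/
def Phi : W →* Gr W := cs.lift ⟨sg cs, sg_liftable cs⟩

theorem Phi_wordProd (ω : List B) : Phi cs (π ω) = (ω.map (sg cs)).prod := by
  induction ω with
  | nil => simp [cs.wordProd_nil]
  | cons j ω ih =>
      rw [cs.wordProd_cons, map_mul, ih, List.map_cons, List.prod_cons]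
      congr 1
      exact cs.lift_apply_simple (sg_liftable cs) j

theorem cf_invariant {ω ω' : List B} (h : π ω = π ω') : cf cs ω = cf cs ω' := by
  have h1 := (prod_map_sg cs ω).symm.trans
    (((Phi_wordProd cs ω).symm.trans (by rw [h, Phi_wordProd])).trans (prod_map_sg cs ω'))
  exact congrArg SemidirectProduct.left h1

theorem not_isLeftDescent_of_not_mem (i : B) (ω : List B) (hi : i ∉ ω)
    (Q : ∀ ν : List B, i ∉ ν → π ν ≠ s i) : ¬ cs.IsLeftDescent (π ω) i := by
  intro hd
  set w := π ω with hw
  obtain ⟨ω₂, hlen2, hprod2⟩ := cs.exists_reduced_word (s i * w)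
  have hprod1 : π (i :: ω₂) = w := by
    rw [cs.wordProd_cons, ← hprod2, cs.simple_mul_simple_cancel_left]
  have hlsm := cs.length_simple_mul w i
  have hlen : cs.length w = ω₂.length + 1 := by
    unfold CoxeterSystem.IsLeftDescent at hd
    have h2 := hlen2.eq
    rw [← hprod2] at h2
    omega
  have hred : cs.IsReduced (i :: ω₂) := by
    unfold CoxeterSystem.IsReduced
    rw [hprod1, List.length_cons, hlen]
  have hnd := hred.nodup_leftInvSeq
  rw [leftInvSeq_cons] at hnd
  have hcount1 : (cs.leftInvSeq (i :: ω₂)).countP (· = s i) = 1 := by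
    rw [leftInvSeq_cons, List.countP_cons]
    rw [List.countP_eq_zero.mpr ?_, if_pos (by simp)]
    intro u hu
    simp only [decide_eq_true_eq]
    intro hcontra
    exact (List.nodup_cons.mp hnd).1 (hcontra ▸ hu)
  have hcf := congrFun (cf_invariant cs (show π ω = π (i :: ω₂) from hprod1.symm)) (s i)
  simp only [cf, hcount1] at hcf
  have hmem : s i ∈ cs.leftInvSeq ω := by
    by_contra hnm
    rw [List.countP_eq_zero.mpr (fun u hu => by
      simp only [decide_eq_true_eq]; intro hcontra; exact hnm (hcontra ▸ hu))] at hcf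
    rw [show ((0 : ℕ) : ZMod 2) = 0 from rfl, show ((1 : ℕ) : ZMod 2) = 1 from rfl] at hcf
    exact one_ne_zero (Multiplicative.ofAdd.injective hcf).symm
  obtain ⟨n, hn, hgetl⟩ := List.getElem_of_mem hmem
  have hn' : n < ω.length := by
    rwa [length_leftInvSeq] at hn
  have hgd : (cs.leftInvSeq ω).getD n 1 = s i := by
    rw [List.getD_eq_getElem _ _ hn, hgetl]
  rw [cs.getD_leftInvSeq] at hgd
  have hget? : ω[n]? = some (ω[n]'hn') := by
    rw [List.getElem?_eq_getElem hn']
  rw [hget?] at hgd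
  simp only [Option.map_some, Option.getD_some] at hgd
  set ν : List B := ω.take n ++ [ω[n]'hn'] ++ (ω.take n).reverse with hν
  have hπν : π ν = s i := by
    rw [hν, cs.wordProd_append, cs.wordProd_append, cs.wordProd_reverse,
      cs.wordProd_singleton, ← hgd]
  refine Q ν ?_ hπν
  intro hmemν
  rw [hν] at hmemν
  simp only [List.mem_append, List.mem_reverse, List.mem_singleton] at hmemν
  rcases hmemν with (h1 | h2) | h3
  · exact hi (List.take_subset n ω h1)
  · exact hi (h2 ▸ List.getElem_mem hn')
  · exact hi (List.take_subset n ω h3)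


variable (M) in
/-- entries of the bilinear form for the geometric representation -/
def k0 (j b : B) : ℝ := if M j b = 0 then -1 else -Real.cos (Real.pi / (M j b))

theorem k0_symm (j b : B) : k0 M j b = k0 M b j := by
  rw [k0, k0, M.symmetric]

theorem k0_diag (j : B) : k0 M j j = 1 := by
  rw [k0, if_neg (by simp [M.diagonal j]), M.diagonal j]
  simp [Real.cos_pi]

/-- the simple roots -/
def alf (j : B) : B →₀ ℝ := Finsupp.single j 1

variable (M) in
/-- the bilinear form against a simple root -/
def Bf (j : B) : (B →₀ ℝ) →ₗ[ℝ] ℝ := Finsupp.linearCombination ℝ (k0 M j)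

theorem Bf_alf (j b : B) : Bf M j (alf b) = k0 M j b := by
  rw [Bf, alf, Finsupp.linearCombination_single, smul_eq_mul, one_mul]

variable (M) in
/-- the geometric representation of the generators -/
def grefl (j : B) : Module.End ℝ (B →₀ ℝ) :=
  LinearMap.id - (Bf M j).smulRight ((2:ℝ) • alf j)

theorem grefl_apply (j : B) (v : B →₀ ℝ) :
    grefl M j v = v - (2 * Bf M j v) • alf j := by
  rw [grefl, LinearMap.sub_apply, LinearMap.id_apply, LinearMap.smulRight_apply,
    smul_comm, ← smul_smul]

theorem grefl_apply_self (j : B) (v : B →₀ ℝ) : grefl M j (grefl M j v) = v := by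
  rw [grefl_apply, grefl_apply, map_sub, map_smul, Bf_alf, k0_diag, smul_eq_mul, mul_one]
  module

theorem grefl_alf_self (j : B) : grefl M j (alf j) = - alf j := by
  rw [grefl_apply, Bf_alf, k0_diag]
  module

theorem grefl_alf (j b : B) : grefl M j (alf b) = alf b - (2 * k0 M j b) • alf j := by
  rw [grefl_apply, Bf_alf]

private theorem sinII (u θ : ℝ) :
    Real.sin (u + θ) = 2 * Real.cos θ * Real.sin u - Real.sin (u - θ) := by
  rw [Real.sin_add, Real.sin_sub]; ring

private theorem sinI (u θ : ℝ) :
    Real.sin (u + 2*θ)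
      = (4 * Real.cos θ ^ 2 - 1) * Real.sin u - 2 * Real.cos θ * Real.sin (u - θ) := by
  rw [show u + 2*θ = u + 2*θ from rfl, Real.sin_add, Real.cos_two_mul, Real.sin_two_mul,
    Real.sin_sub]
  ring

theorem k0_of_ne_zero (j k : B) (hm : M j k ≠ 0) :
    k0 M j k = -Real.cos (Real.pi / (M j k)) := by
  rw [k0, if_neg hm]

theorem grefl_pow_orbit (j k : B) (hjk : j ≠ k) (hm : M j k ≠ 0) (r : ℕ) :
    ((grefl M j * grefl M k) ^ r) (alf j)
      = (Real.sin ((2*(r:ℝ)+1) * (Real.pi / (M j k))) / Real.sin (Real.pi / (M j k))) • alf j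
        + (Real.sin ((2*(r:ℝ)) * (Real.pi / (M j k))) / Real.sin (Real.pi / (M j k))) • alf k
    ∧ ((grefl M j * grefl M k) ^ r) (alf k)
      = (-Real.sin ((2*(r:ℝ)) * (Real.pi / (M j k))) / Real.sin (Real.pi / (M j k))) • alf j
        + (-Real.sin ((2*(r:ℝ)-1) * (Real.pi / (M j k))) / Real.sin (Real.pi / (M j k))) • alf k
    := by
  have hm2 : 2 ≤ M j k := by
    have h1 := M.off_diagonal j k hjk
    omega
  set m : ℕ := M j k with hmdef
  set θ : ℝ := Real.pi / m with hθdef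
  set S : ℝ := Real.sin θ with hSdef
  set C : ℝ := Real.cos θ with hCdef
  have hθpos : 0 < θ := by
    rw [hθdef]
    positivity
  have hθlt : θ < Real.pi := by
    rw [hθdef, div_lt_iff₀ (by positivity)]
    nlinarith [Real.pi_pos, mul_le_mul_of_nonneg_left
      (by exact_mod_cast hm2 : (2:ℝ) ≤ m) Real.pi_pos.le]
  have hS : 0 < S := Real.sin_pos_of_pos_of_lt_pi hθpos hθlt
  have hc : k0 M j k = -C := by rw [k0_of_ne_zero j k hm, hCdef]
  have hρj : (grefl M j * grefl M k) (alf j)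
      = (4*C^2-1) • alf j + (2*C) • alf k := by
    rw [Module.End.mul_apply, grefl_alf, k0_symm, hc, map_sub, map_smul, grefl_alf_self,
      grefl_alf, hc]
    module
  have hρk : (grefl M j * grefl M k) (alf k)
      = (-2*C) • alf j + (-1 : ℝ) • alf k := by
    have h1 : grefl M k (alf k) = - alf k := grefl_alf_self k
    rw [Module.End.mul_apply, h1, map_neg, grefl_alf, hc]
    module
  induction r with
  | zero =>
      constructor
      · rw [pow_zero, Module.End.one_apply]
        norm_num
        rw [div_self hS.ne']
        module
      · rw [pow_zero, Module.End.one_apply]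
        norm_num
        rw [div_self hS.ne', one_smul]
  | succ r ih =>
      have e1 : Real.sin ((2*((r:ℝ)+1)+1)*θ)
          = (4*C^2-1) * Real.sin ((2*(r:ℝ)+1)*θ) - 2*C*Real.sin ((2*(r:ℝ))*θ) := by
        have h := sinI ((2*(r:ℝ)+1)*θ) θ
        rw [show (2*(r:ℝ)+1)*θ + 2*θ = (2*((r:ℝ)+1)+1)*θ by ring,
          show (2*(r:ℝ)+1)*θ - θ = (2*(r:ℝ))*θ by ring, ← hCdef] at h
        exact h
      have e2 : Real.sin ((2*((r:ℝ)+1))*θ)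
          = 2*C*Real.sin ((2*(r:ℝ)+1)*θ) - Real.sin ((2*(r:ℝ))*θ) := by
        have h := sinII ((2*(r:ℝ)+1)*θ) θ
        rw [show (2*(r:ℝ)+1)*θ + θ = (2*((r:ℝ)+1))*θ by ring,
          show (2*(r:ℝ)+1)*θ - θ = (2*(r:ℝ))*θ by ring, ← hCdef] at h
        exact h
      have e3 : Real.sin ((2*((r:ℝ)+1))*θ)
          = (4*C^2-1) * Real.sin ((2*(r:ℝ))*θ) - 2*C*Real.sin ((2*(r:ℝ)-1)*θ) := by
        have h := sinI ((2*(r:ℝ))*θ) θ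
        rw [show (2*(r:ℝ))*θ + 2*θ = (2*((r:ℝ)+1))*θ by ring,
          show (2*(r:ℝ))*θ - θ = (2*(r:ℝ)-1)*θ by ring, ← hCdef] at h
        exact h
      have e4 : Real.sin ((2*((r:ℝ)+1)-1)*θ)
          = 2*C*Real.sin ((2*(r:ℝ))*θ) - Real.sin ((2*(r:ℝ)-1)*θ) := by
        have h := sinII ((2*(r:ℝ))*θ) θ
        rw [show (2*(r:ℝ))*θ + θ = (2*((r:ℝ)+1)-1)*θ by ring,
          show (2*(r:ℝ))*θ - θ = (2*(r:ℝ)-1)*θ by ring, ← hCdef] at h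
        exact h
      constructor
      · rw [pow_succ', Module.End.mul_apply, ih.1, map_add, map_smul, map_smul, hρj, hρk]
        push_cast
        rw [e1, e2]
        module
      · rw [pow_succ', Module.End.mul_apply, ih.2, map_add, map_smul, map_smul, hρj, hρk]
        push_cast
        rw [e3, e4]
        module

private theorem pow_fix {V : Type*} [AddCommGroup V] [Module ℝ V]
    (f : Module.End ℝ V) (u : V) (h : f u = u) (n : ℕ) : (f ^ n) u = u := by
  induction n with
  | zero => rw [pow_zero, Module.End.one_apply]
  | succ n ih => rw [pow_succ', Module.End.mul_apply, ih, h]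

theorem grefl_liftable : M.IsLiftable (grefl M) := by
  intro j k
  rcases eq_or_ne j k with rfl | hjk
  · rw [M.diagonal, pow_one]
    refine LinearMap.ext fun v => ?_
    rw [Module.End.mul_apply, grefl_apply_self, Module.End.one_apply]
  rcases eq_or_ne (M j k) 0 with h0 | h0
  · rw [h0, pow_zero]
  have hm2 : 2 ≤ M j k := by have := M.off_diagonal j k hjk; omega
  set m : ℕ := M j k with hmdef
  set θ : ℝ := Real.pi / m with hθdef
  set S : ℝ := Real.sin θ with hSdef
  have hθpos : 0 < θ := by rw [hθdef]; positivity
  have hθlt : θ < Real.pi := by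
    rw [hθdef, div_lt_iff₀ (by positivity)]
    nlinarith [Real.pi_pos, mul_le_mul_of_nonneg_left
      (by exact_mod_cast hm2 : (2:ℝ) ≤ m) Real.pi_pos.le]
  have hS : 0 < S := Real.sin_pos_of_pos_of_lt_pi hθpos hθlt
  have hmR : (m:ℝ) ≠ 0 := by positivity
  -- evaluate the orbit at r = m
  have horb := grefl_pow_orbit j k hjk h0 m
  have ha1 : (2*(m:ℝ)+1) * θ = θ + 2*Real.pi := by
    rw [hθdef]; field_simp; ring
  have ha2 : (2*(m:ℝ)) * θ = 2*Real.pi := by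
    rw [hθdef]; field_simp
  have ha3 : (2*(m:ℝ)-1) * θ = -θ + 2*Real.pi := by
    rw [hθdef]; field_simp; ring
  rw [ha1, ha2, ha3, Real.sin_add_two_pi, Real.sin_add_two_pi, Real.sin_two_pi,
    Real.sin_neg] at horb
  have hfixj : ((grefl M j * grefl M k) ^ m) (alf j) = alf j := by
    rw [horb.1, ← hSdef, div_self hS.ne']
    norm_num
  have hfixk : ((grefl M j * grefl M k) ^ m) (alf k) = alf k := by
    rw [horb.2, ← hSdef, neg_neg, div_self hS.ne']
    norm_num
  -- now a general vector
  refine LinearMap.ext fun v => ?_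
  rw [Module.End.one_apply]
  set c : ℝ := k0 M j k with hcdef
  have hC1 : Real.cos θ < 1 ∧ -1 < Real.cos θ := by
    constructor <;> nlinarith [Real.sin_sq_add_cos_sq θ, hS]
  have hc2 : 1 - c^2 ≠ 0 := by
    have : c = -Real.cos θ := by rw [hcdef, k0_of_ne_zero j k h0, hθdef]
    rw [this]
    nlinarith [hC1.1, hC1.2]
  set a : ℝ := Bf M j v with hadef
  set b : ℝ := Bf M k v with hbdef
  set x : ℝ := (a - c*b)/(1-c^2) with hxdef
  set y : ℝ := (b - c*a)/(1-c^2) with hydef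
  set u : (B →₀ ℝ) := v - x • alf j - y • alf k with hudef
  have hBju : Bf M j u = 0 := by
    rw [hudef, map_sub, map_sub, map_smul, map_smul, Bf_alf, Bf_alf, k0_diag, ← hadef,
      ← hcdef, smul_eq_mul, smul_eq_mul, hxdef, hydef]
    field_simp
    ring
  have hBku : Bf M k u = 0 := by
    rw [hudef, map_sub, map_sub, map_smul, map_smul, Bf_alf, Bf_alf, k0_diag,
      k0_symm, ← hcdef, ← hbdef, smul_eq_mul, smul_eq_mul, hxdef, hydef]
    field_simp
    ring
  have hfixu : ((grefl M j * grefl M k) ^ m) u = u := by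
    have h1 : grefl M k u = u := by
      rw [grefl_apply, hBku, mul_zero, zero_smul, sub_zero]
    have h2 : grefl M j u = u := by
      rw [grefl_apply, hBju, mul_zero, zero_smul, sub_zero]
    refine pow_fix _ _ ?_ m
    rw [Module.End.mul_apply, h1, h2]
  have hv : v = x • alf j + y • alf k + u := by rw [hudef]; module
  rw [hv, map_add, map_add, map_smul, map_smul, hfixj, hfixk, hfixu]

/-- the geometric representation -/
def Psi : W →* Module.End ℝ (B →₀ ℝ) := cs.lift ⟨grefl M, grefl_liftable⟩

theorem Psi_coord (i : B) (ν : List B) (hiν : i ∉ ν) (v : B →₀ ℝ) :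
    ((Psi cs (π ν)) v) i = v i := by
  induction ν generalizing v with
  | nil => rw [cs.wordProd_nil, map_one, Module.End.one_apply]
  | cons j ν ih =>
      rw [cs.wordProd_cons, map_mul, Module.End.mul_apply]
      have hj : Psi cs (s j) = grefl M j := cs.lift_apply_simple grefl_liftable j
      have hji : j ≠ i := fun he => hiν (he ▸ List.mem_cons_self)
      rw [hj, grefl_apply, Finsupp.sub_apply, Finsupp.smul_apply, alf,
        Finsupp.single_eq_of_ne' hji, smul_zero, sub_zero]
      exact ih (fun hh => hiν (List.mem_cons_of_mem _ hh)) v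

theorem wordProd_ne_simple (i : B) (ν : List B) (hiν : i ∉ ν) : π ν ≠ s i := by
  intro h
  have h1 := Psi_coord cs i ν hiν (alf i)
  rw [h, show Psi cs (s i) = grefl M i from cs.lift_apply_simple grefl_liftable i,
    grefl_alf_self, Finsupp.neg_apply] at h1
  rw [alf, Finsupp.single_eq_same] at h1
  norm_num at h1


theorem not_isLeftDescent_final (i : B) (ω : List B) (hi : i ∉ ω) :
    ¬ cs.IsLeftDescent (π ω) i :=
  not_isLeftDescent_of_not_mem cs i ω hi (fun ν hν => wordProd_ne_simple cs i ν hν)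

section Comb

variable [DecidableEq B]

/-- auxiliary construction: the letter-sets for the word of `s i * w` in the rotated order -/
def buildL (i : B) : List (Finset B) → List (Finset B)
  | [] => []
  | [A] => [A.erase i]
  | A :: C :: r => (A.erase i ∪ C ∩ {i}) :: buildL i (C :: r)

theorem buildL_chain' (i : B) :
    ∀ K : List (Finset B), K.Chain' (fun A C => C ⊆ A) →
      (buildL i K).Chain' (fun A C => C ⊆ A) := by
  intro K
  induction K with
  | nil => intro _; simp [buildL, List.Chain', List.isChain_nil]
  | cons A K ih =>
      cases K with
      | nil => intro _; simp [buildL, List.Chain', List.isChain_singleton]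
      | cons C r =>
          intro h
          rw [buildL, List.Chain', List.isChain_cons]
          refine ⟨?_, ih (List.IsChain.tail h)⟩
          intro y hy
          have hCA : C ⊆ A := (List.isChain_cons_cons.mp h).1
          cases r with
          | nil =>
              simp only [buildL, List.head?_cons, Option.mem_def, Option.some_inj] at hy
              subst hy
              exact (Finset.erase_subset_erase i hCA).trans Finset.subset_union_left
          | cons D r' =>
              simp only [buildL, List.head?_cons, Option.mem_def, Option.some_inj] at hy
              subst hy
              have hDC : D ⊆ C := (List.isChain_cons_cons.mp (List.IsChain.tail h)).1
              refine Finset.union_subset ?_ ?_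
              · exact (Finset.erase_subset_erase i hCA).trans Finset.subset_union_left
              · refine Finset.Subset.trans ?_ Finset.subset_union_right
                exact Finset.inter_subset_inter hDC (Finset.Subset.refl _)

variable (i : B) (t : List B)

theorem filter_newblock (hit : i ∉ t) (A C : Finset B) :
    (t ++ [i]).filter (· ∈ A.erase i ∪ C ∩ {i})
      = t.filter (· ∈ A) ++ (if i ∈ C then [i] else []) := by
  rw [List.filter_append]
  congr 1
  · refine List.filter_congr fun b hb => ?_
    have hbi : b ≠ i := fun he => hit (he ▸ hb)
    simp [Finset.mem_union, Finset.mem_erase, Finset.mem_inter, Finset.mem_singleton, hbi]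
  · by_cases hiC : i ∈ C <;> simp [hiC]

theorem filter_lastblock (hit : i ∉ t) (A : Finset B) :
    (t ++ [i]).filter (· ∈ A.erase i) = t.filter (· ∈ A) := by
  rw [List.filter_append]
  have h2 : [i].filter (· ∈ A.erase i) = [] := by simp
  rw [h2, List.append_nil]
  refine List.filter_congr fun b hb => ?_
  have hbi : b ≠ i := fun he => hit (he ▸ hb)
  simp [Finset.mem_erase, hbi]

theorem buildL_flatten (hit : i ∉ t) : ∀ (A : Finset B) (r : List (Finset B)),
    (if i ∈ A then [i] else [])
        ++ ((buildL i (A :: r)).map (fun X => (t ++ [i]).filter (· ∈ X))).flatten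
      = (((A :: r).map (fun X => (i :: t).filter (· ∈ X))).flatten) := by
  intro A r
  induction r generalizing A with
  | nil =>
      simp only [buildL, List.map_cons, List.map_nil, List.flatten_cons, List.flatten_nil,
        List.append_nil]
      rw [filter_lastblock i t hit, List.filter_cons]
      by_cases hiA : i ∈ A <;> simp [hiA]
  | cons C r' ih =>
      have hfA : (i :: t).filter (· ∈ A) = (if i ∈ A then [i] else []) ++ t.filter (· ∈ A) := by
        rw [List.filter_cons]
        by_cases hiA : i ∈ A <;> simp [hiA]
      rw [buildL, List.map_cons, List.flatten_cons, filter_newblock i t hit,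
        List.map_cons, List.flatten_cons, hfA, ← ih C]
      simp [List.append_assoc]

theorem chain'_subset_head : ∀ (K : List (Finset B)) (A₀ : Finset B),
    (A₀ :: K).Chain' (fun A C => C ⊆ A) → ∀ A ∈ A₀ :: K, A ⊆ A₀ := by
  intro K
  induction K with
  | nil =>
      intro A₀ _ A hA
      rw [List.mem_singleton] at hA
      exact hA ▸ Finset.Subset.refl A₀
  | cons C K' ih =>
      intro A₀ h A hA
      rcases List.mem_cons.mp hA with rfl | hA'
      · exact Finset.Subset.refl A
      · exact (ih C (List.IsChain.tail h) A hA').trans (List.isChain_cons_cons.mp h).1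

end Comb

theorem wordProd_mem_closure (i : B) (ω : List B) (hi : ∀ b ∈ ω, b ≠ i) :
    π ω ∈ Subgroup.closure (cs.simple '' {j | j ≠ i}) := by
  induction ω with
  | nil => rw [cs.wordProd_nil]; exact one_mem _
  | cons b ω ih =>
      rw [cs.wordProd_cons]
      refine mul_mem (Subgroup.subset_closure ⟨b, hi b (List.mem_cons_self), rfl⟩) ?_
      exact ih fun b' hb' => hi b' (List.mem_cons_of_mem _ hb')

end SortAux


end

/-- N. Reading's recursive characterization of sortable elements.  Let `c` be the Coxeter
element with reduced word `s :: t` (so the simple reflection `s = simple i` is initial in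
`c`).  If `w` is `c`-sortable and `w ≥ s` in weak order (`ℓ(sw) < ℓ(w)`), then `sw` is
`scs`-sortable; if `w` is `c`-sortable and `w ≱ s` (`ℓ(sw) > ℓ(w)`), then `w` lies in the
maximal standard parabolic subgroup `W_{⟨s⟩}` and is `sc`-sortable as an element of it. -/
theorem sortable_recursion {B : Type*} {W : Type*} [Group W] [Finite W] [DecidableEq B]
    {M : CoxeterMatrix B} (cs : CoxeterSystem M W) (i : B) (t : List B)
    (hnd : (i :: t).Nodup) (hfull : ∀ b : B, b ∈ (i :: t))
    (w : W) (hw : IsSortable cs (i :: t) w) :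
    (cs.length (cs.simple i * w) < cs.length w →
      IsSortable cs (t ++ [i]) (cs.simple i * w)) ∧
    (cs.length w < cs.length (cs.simple i * w) →
      w ∈ Subgroup.closure (cs.simple '' {j | j ≠ i}) ∧ IsSortable cs t w) := by
  obtain ⟨K, hch, hprod, hlen⟩ := hw
  have hit : i ∉ t := (List.nodup_cons.mp hnd).1
  by_cases hcase : ∃ K₁ K', K = K₁ :: K' ∧ i ∈ K₁
  · obtain ⟨K₁, K', rfl, hiK₁⟩ := hcase
    set y : List B := t.filter (· ∈ K₁)
        ++ ((K'.map (fun A => (i::t).filter (· ∈ A))).flatten) with hy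
    have hword : (((K₁::K').map (fun A => (i::t).filter (· ∈ A))).flatten) = i :: y := by
      rw [List.map_cons, List.flatten_cons, List.filter_cons]
      simp only [hiK₁, decide_true, if_true, decide_eq_true_eq]
      rw [hy, List.cons_append]
    have hw2 : cs.simple i * w = cs.wordProd y := by
      rw [hprod, hword, cs.wordProd_cons, cs.simple_mul_simple_cancel_left]
    have hlly : cs.length w = y.length + 1 := by
      rw [hlen, hword, List.length_cons]
    have hsmall : cs.length (cs.simple i * w) ≤ y.length := by
      rw [hw2]; exact cs.length_wordProd_le y
    have hlsm := cs.length_simple_mul w i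
    have hexact : cs.length (cs.simple i * w) = y.length := by
      rcases hlsm with h | h <;> omega
    have hnew : ((SortAux.buildL i (K₁ :: K')).map
        (fun X => (t ++ [i]).filter (· ∈ X))).flatten = y := by
      have hb := SortAux.buildL_flatten i t hit K₁ K'
      rw [if_pos hiK₁, hword] at hb
      simpa using hb
    constructor
    · intro _
      exact ⟨SortAux.buildL i (K₁ :: K'), SortAux.buildL_chain' i _ hch,
        by rw [hnew, ← hw2], by rw [hnew, hexact]⟩
    · intro hcon
      omega
  · have hnoti : ∀ A ∈ K, i ∉ A := by
      intro A hA hiA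
      cases K with
      | nil => simp at hA
      | cons K₁ K' =>
          exact hcase ⟨K₁, K', rfl, SortAux.chain'_subset_head K' K₁ hch A hA hiA⟩
    have hfw : (K.map (fun A => (i::t).filter (· ∈ A))) = K.map (fun A => t.filter (· ∈ A)) := by
      refine List.map_congr_left fun A hA => ?_
      rw [List.filter_cons, if_neg (by simpa using hnoti A hA)]
    have hiword : i ∉ (K.map (fun A => (i::t).filter (· ∈ A))).flatten := by
      rw [hfw]
      intro hmem
      rw [List.mem_flatten] at hmem
      obtain ⟨L, hL, hiL⟩ := hmem
      rw [List.mem_map] at hL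
      obtain ⟨A, hA, rfl⟩ := hL
      exact hit (List.mem_of_mem_filter hiL)
    constructor
    · intro hlt
      exact absurd hlt (by
        have h2 := SortAux.not_isLeftDescent_final cs i _ hiword
        rw [← hprod] at h2
        exact h2)
    · intro _
      refine ⟨?_, K, hch, by rw [hprod, hfw], by rw [hlen, hfw]⟩
      rw [hprod]
      exact SortAux.wordProd_mem_closure cs i _ (fun b hb => fun he => hiword (he ▸ hb))
end

section
/- In the symmetric group S_n, let i ∈ {1,…,n−1} and let u ∈ S_n be the parabolic projection of w ∈ S_n to W_{⟨s_i⟩} (values 1,…,i in their relative order in w, followed by values i+1,…,n in their relative order in w). Then this projection is a monoid-style retraction compatible with weak order covers: for any t = s_j with ℓ(w s_j) < ℓ(w), either the projection of w s_j equals the projection of w, or it is covered by the projection of w in right weak order. -/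
open scoped Classical

/-- The simple transposition swapping `j` and `j+1` (0-indexed) in `S_n`. -/
def adjSwap (n j : ℕ) (h : j + 1 < n) : Equiv.Perm (Fin n) :=
  Equiv.swap ⟨j, Nat.lt_of_succ_lt h⟩ ⟨j + 1, h⟩

section aux
variable {n : ℕ}

/-- A strictly monotone permutation of `Fin n` is the identity. -/
lemma perm_eq_one_of_strictMono (g : Equiv.Perm (Fin n)) (hg : StrictMono ⇑g) : g = 1 := by
  have e : Fin n ≃o Fin n := StrictMono.orderIsoOfSurjective ⇑g hg g.surjective
  ext p
  have := Fin.coe_orderIso_apply (StrictMono.orderIsoOfSurjective ⇑g hg g.surjective) p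
  simp only [StrictMono.coe_orderIsoOfSurjective] at this
  simpa using this

lemma adjSwap_val {k : ℕ} (hk : k + 1 < n) (p : Fin n) :
    ((adjSwap n k hk p : Fin n) : ℕ)
      = if (p : ℕ) = k then k + 1 else if (p : ℕ) = k + 1 then k else (p : ℕ) := by
  unfold adjSwap
  rcases eq_or_ne (p : ℕ) k with h0 | h0
  · have : p = ⟨k, Nat.lt_of_succ_lt hk⟩ := Fin.ext h0
    subst this; rw [Equiv.swap_apply_left]; simp [h0]
  · rcases eq_or_ne (p : ℕ) (k + 1) with h1 | h1
    · have : p = ⟨k + 1, hk⟩ := Fin.ext h1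
      subst this; rw [Equiv.swap_apply_right]; simp
    · rw [Equiv.swap_apply_of_ne_of_ne (fun hh => h0 (by rw [hh])) (fun hh => h1 (by rw [hh]))]
      simp [h0, h1]

lemma adjSwap_lt_iff {k : ℕ} (hk : k + 1 < n) {p q : Fin n}
    (h1 : ¬((p : ℕ) = k ∧ (q : ℕ) = k + 1)) (h2 : ¬((p : ℕ) = k + 1 ∧ (q : ℕ) = k)) :
    (adjSwap n k hk p < adjSwap n k hk q) ↔ p < q := by
  rw [Fin.lt_def, Fin.lt_def, adjSwap_val, adjSwap_val]
  split_ifs <;> omega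

lemma adjSwap_involutive {k : ℕ} (hk : k + 1 < n) (p : Fin n) :
    adjSwap n k hk (adjSwap n k hk p) = p := Equiv.swap_apply_self _ _ _

end aux

section inv
variable {n : ℕ}

lemma invNum_mul_adjSwap {k : ℕ} (hk : k + 1 < n) (u : Equiv.Perm (Fin n))
    (hasc : u ⟨k, Nat.lt_of_succ_lt hk⟩ < u ⟨k + 1, hk⟩) :
    invNum (u * adjSwap n k hk) = invNum u + 1 := by
  classical
  set kf : Fin n := ⟨k, Nat.lt_of_succ_lt hk⟩
  set k1f : Fin n := ⟨k + 1, hk⟩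
  set s := adjSwap n k hk with hs
  have hskf : s kf = k1f := Equiv.swap_apply_left _ _
  have hsk1f : s k1f = kf := Equiv.swap_apply_right _ _
  set S := Finset.univ.filter (fun p : Fin n × Fin n => p.1 < p.2 ∧ u p.2 < u p.1) with hS
  set S' := Finset.univ.filter
    (fun p : Fin n × Fin n => p.1 < p.2 ∧ (u * s) p.2 < (u * s) p.1) with hS'
  have key : S' = insert (kf, k1f) (S.image (fun p => (s p.1, s p.2))) := by
    ext ⟨p, q⟩
    simp only [hS', hS, Finset.mem_insert, Finset.mem_image, Finset.mem_filter,
      Finset.mem_univ, true_and, Prod.mk.injEq, Prod.exists]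
    constructor
    · rintro ⟨hpq, hval⟩
      rcases Classical.em ((p : ℕ) = k ∧ (q : ℕ) = k + 1) with hc | hc
      · left
        exact ⟨Fin.ext hc.1, Fin.ext hc.2⟩
      · right
        refine ⟨s p, s q, ⟨?_, ?_⟩, ?_, ?_⟩
        · rw [← (adjSwap_lt_iff hk (p := s p) (q := s q) ?_ ?_)]
          · rw [← hs]; rw [adjSwap_involutive, adjSwap_involutive]; exact hpq
          · rintro ⟨h1, h2⟩
            have : s p = kf := Fin.ext h1
            have hp : p = k1f := by
              have := congrArg s this; rwa [adjSwap_involutive, hskf] at this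
            have : s q = k1f := Fin.ext h2
            have hq : q = kf := by
              have := congrArg s this; rwa [adjSwap_involutive, hsk1f] at this
            subst hp; subst hq
            exact absurd hpq (by rw [Fin.lt_def]; simp [kf, k1f])
          · rintro ⟨h1, h2⟩
            have : s p = k1f := Fin.ext h1
            have hp : p = kf := by
              have := congrArg s this; rwa [adjSwap_involutive, hsk1f] at this
            have : s q = kf := Fin.ext h2
            have hq : q = k1f := by
              have := congrArg s this; rwa [adjSwap_involutive, hskf] at this
            exact hc ⟨by rw [hp], by rw [hq]⟩
        · exact hval
        · exact adjSwap_involutive hk p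
        · exact adjSwap_involutive hk q
    · rintro (⟨rfl, rfl⟩ | ⟨a, b, ⟨hab, hvab⟩, rfl, rfl⟩)
      · refine ⟨by rw [Fin.lt_def]; simp [kf, k1f], ?_⟩
        show u (s k1f) < u (s kf)
        rw [hskf, hsk1f]; exact hasc
      · have hne : ¬((a : ℕ) = k ∧ (b : ℕ) = k + 1) := by
          rintro ⟨h1, h2⟩
          have ha : a = kf := Fin.ext h1
          have hb : b = k1f := Fin.ext h2
          subst ha; subst hb
          exact absurd hvab (not_lt_of_gt hasc)
        refine ⟨adjSwap_lt_iff hk (by tauto) ?_ |>.2 hab, ?_⟩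
        · rintro ⟨h1, h2⟩
          have ha : a = k1f := Fin.ext h1
          have hb : b = kf := Fin.ext h2
          subst ha; subst hb
          exact absurd hab (by rw [Fin.lt_def]; simp [kf, k1f])
        · show u (s (s b)) < u (s (s a))
          rw [adjSwap_involutive, adjSwap_involutive]
          exact hvab
  have hnotmem : (kf, k1f) ∉ S.image (fun p => (s p.1, s p.2)) := by
    simp only [Finset.mem_image, Prod.mk.injEq, Prod.exists, not_exists]
    rintro a b ⟨hmem, h1, h2⟩
    have ha : a = k1f := by
      have := congrArg s h1; rwa [adjSwap_involutive, hskf] at this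
    have hb : b = kf := by
      have := congrArg s h2; rwa [adjSwap_involutive, hsk1f] at this
    rw [hS, Finset.mem_filter] at hmem
    subst ha; subst hb
    exact absurd hmem.2.1 (by rw [Fin.lt_def]; simp [kf, k1f])
  have hcard : (S.image (fun p => (s p.1, s p.2))).card = S.card := by
    apply Finset.card_image_of_injective
    intro x y hxy
    have h1 : s x.1 = s y.1 := congrArg Prod.fst hxy
    have h2 : s x.2 = s y.2 := congrArg Prod.snd hxy
    exact Prod.ext (s.injective h1) (s.injective h2)
  show S'.card = S.card + 1
  rw [key, Finset.card_insert_of_notMem hnotmem, hcard]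

lemma invNum_one : invNum (1 : Equiv.Perm (Fin n)) = 0 := by
  unfold invNum
  rw [Finset.card_eq_zero, Finset.filter_eq_empty_iff]
  rintro ⟨p, q⟩ _
  simp only [Equiv.Perm.one_apply, not_and]
  exact fun h => not_lt_of_gt h

lemma invNum_adjSwap {k : ℕ} (hk : k + 1 < n) : invNum (adjSwap n k hk) = 1 := by
  have := invNum_mul_adjSwap hk 1 (by simp [Fin.lt_def])
  rwa [one_mul, invNum_one, zero_add] at this

lemma descent_of_invNum_lt {k : ℕ} (hk : k + 1 < n) (u : Equiv.Perm (Fin n))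
    (h : invNum (u * adjSwap n k hk) < invNum u) :
    u ⟨k + 1, hk⟩ < u ⟨k, Nat.lt_of_succ_lt hk⟩ := by
  rcases lt_trichotomy (u ⟨k, Nat.lt_of_succ_lt hk⟩) (u ⟨k + 1, hk⟩) with hlt | heq | hgt
  · rw [invNum_mul_adjSwap hk u hlt] at h; omega
  · exact absurd (u.injective heq) (by simp [Fin.ext_iff])
  · exact hgt

end inv

section uniq
variable {n i : ℕ}

lemma isBlockSort_unique {w u v : Equiv.Perm (Fin n)}
    (hu : IsBlockSort i w u) (hv : IsBlockSort i w v) : u = v := by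
  have hvsymm : ∀ x : Fin n, (v.symm x : ℕ) < i ↔ (x : ℕ) < i := by
    intro x
    have := hv.1 (v.symm x)
    rwa [Equiv.apply_symm_apply] at this
  have hg : StrictMono ⇑(v⁻¹ * u) := by
    intro p q hpq
    have hgp : (v⁻¹ * u) p = v.symm (u p) := rfl
    have hgq : (v⁻¹ * u) q = v.symm (u q) := rfl
    rcases Nat.lt_or_ge (p : ℕ) i with hp | hp
    · rcases Nat.lt_or_ge (q : ℕ) i with hq | hq
      · -- both blocks < i
        have hblock : (((u p : ℕ) < i ∧ (u q : ℕ) < i) ∨ (i ≤ (u p : ℕ) ∧ i ≤ (u q : ℕ))) :=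
          Or.inl ⟨(hu.1 p).1 hp, (hu.1 q).1 hq⟩
        have h1 := hv.2 (u p) (u q) hblock
        have h2 := hu.2 (u p) (u q) hblock
        rw [Equiv.symm_apply_apply, Equiv.symm_apply_apply] at h2
        rw [hgp, hgq]
        exact h1.2 (h2.1 hpq)
      · -- mixed
        rw [hgp, hgq, Fin.lt_def]
        have h1 : (v.symm (u p) : ℕ) < i := (hvsymm _).2 ((hu.1 p).1 hp)
        have h2 : ¬ (v.symm (u q) : ℕ) < i := fun hh =>
          absurd ((hu.1 q).2 ((hvsymm _).1 hh)) (by omega)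
        omega
    · have hq : i ≤ (q : ℕ) := by
        have := Fin.lt_def.1 hpq; omega
      have hblock : (((u p : ℕ) < i ∧ (u q : ℕ) < i) ∨ (i ≤ (u p : ℕ) ∧ i ≤ (u q : ℕ))) :=
        Or.inr ⟨by have := (hu.1 p); omega, by have := (hu.1 q); omega⟩
      have h1 := hv.2 (u p) (u q) hblock
      have h2 := hu.2 (u p) (u q) hblock
      rw [Equiv.symm_apply_apply, Equiv.symm_apply_apply] at h2
      rw [hgp, hgq]
      exact h1.2 (h2.1 hpq)
  have := perm_eq_one_of_strictMono _ hg
  have h2 : u = v := by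
    have := inv_mul_eq_one.1 this
    exact this.symm
  exact h2

end uniq

section more
variable {n : ℕ}

lemma adjSwap_mul_self {k : ℕ} (hk : k + 1 < n) :
    adjSwap n k hk * adjSwap n k hk = 1 := Equiv.swap_mul_self _ _

lemma adjSwap_inv {k : ℕ} (hk : k + 1 < n) :
    (adjSwap n k hk)⁻¹ = adjSwap n k hk := Equiv.swap_inv _ _

lemma mul_adjSwap_symm {k : ℕ} (hk : k + 1 < n) (f : Equiv.Perm (Fin n)) (x : Fin n) :
    (f * adjSwap n k hk).symm x = adjSwap n k hk (f.symm x) := by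
  show (f * adjSwap n k hk)⁻¹ x = _
  rw [mul_inv_rev, adjSwap_inv]
  rfl

lemma adjSwap_apply_left {k : ℕ} (hk : k + 1 < n) :
    adjSwap n k hk ⟨k, Nat.lt_of_succ_lt hk⟩ = ⟨k + 1, hk⟩ := Equiv.swap_apply_left _ _

lemma adjSwap_apply_right {k : ℕ} (hk : k + 1 < n) :
    adjSwap n k hk ⟨k + 1, hk⟩ = ⟨k, Nat.lt_of_succ_lt hk⟩ := Equiv.swap_apply_right _ _

end more

/-- The parabolic projection of `S_n` onto `W_{⟨sᵢ⟩}` is compatible with weak order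
covers: if `ℓ(w sⱼ) < ℓ(w)`, then the projection `u'` of `w sⱼ` either equals the
projection `u` of `w`, or is covered by it in right weak order
(`u' ≤ u` and `ℓ(u) = ℓ(u') + 1`). -/

theorem blockSort_cover_compatible {n i : ℕ} (hi0 : 0 < i) (hin : i < n)
    (j : ℕ) (hj : j + 1 < n) (w u u' : Equiv.Perm (Fin n))
    (hu : IsBlockSort i w u)
    (hdesc : invNum (w * adjSwap n j hj) < invNum w)
    (hu' : IsBlockSort i (w * adjSwap n j hj) u') :
    u' = u ∨
      (invNum u' + invNum (u'⁻¹ * u) = invNum u ∧ invNum u = invNum u' + 1) := by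
  classical
  set s := adjSwap n j hj with hs
  set jf : Fin n := ⟨j, Nat.lt_of_succ_lt hj⟩ with hjf
  set j1f : Fin n := ⟨j + 1, hj⟩ with hj1f
  set w' := w * s with hw'
  set a := w j1f with ha
  set b := w jf with hb
  have hab : a < b := descent_of_invNum_lt hj w hdesc
  have hw'jf : w' jf = a := by
    show w (s jf) = a
    rw [hs, adjSwap_apply_left hj]
  have hw'j1f : w' j1f = b := by
    show w (s j1f) = b
    rw [hs, adjSwap_apply_right hj]
  have hw'a : w'.symm a = jf := by rw [Equiv.symm_apply_eq, hw'jf]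
  have hw'b : w'.symm b = j1f := by rw [Equiv.symm_apply_eq, hw'j1f]
  have hwsymm : ∀ x, w.symm x = s (w'.symm x) := by
    intro x
    have hww : w' * s = w := by rw [hw', mul_assoc, hs, adjSwap_mul_self hj, mul_one]
    rw [← hww, hs]
    exact mul_adjSwap_symm hj w' x
  have hw'symm_eq_a : ∀ x : Fin n, (w'.symm x : ℕ) = j ↔ x = a := by
    intro x
    constructor
    · intro hx
      have : w'.symm x = jf := Fin.ext hx
      have := congrArg w' this
      rwa [Equiv.apply_symm_apply, hw'jf] at this
    · rintro rfl; rw [hw'a]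
  have hw'symm_eq_b : ∀ x : Fin n, (w'.symm x : ℕ) = j + 1 ↔ x = b := by
    intro x
    constructor
    · intro hx
      have : w'.symm x = j1f := Fin.ext hx
      have := congrArg w' this
      rwa [Equiv.apply_symm_apply, hw'j1f] at this
    · rintro rfl; rw [hw'b]
  by_cases hcase : ((a : ℕ) < i ∧ (b : ℕ) < i) ∨ (i ≤ (a : ℕ) ∧ i ≤ (b : ℕ))
  · -- same block: the projections differ by an adjacent transposition
    right
    set k := u'.symm a with hk
    set m := u'.symm b with hm
    have hu'symmlt : ∀ x : Fin n, (u'.symm x : ℕ) < i ↔ (x : ℕ) < i := by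
      intro x
      have := hu'.1 (u'.symm x)
      rwa [Equiv.apply_symm_apply] at this
    have hkm : k < m := by
      apply (hu'.2 a b hcase).2
      rw [hw'a, hw'b]
      show j < j + 1
      omega
    have hmval : (m : ℕ) = (k : ℕ) + 1 := by
      by_contra hne
      have hlt : (k : ℕ) + 1 < (m : ℕ) := by
        have : (k : ℕ) < (m : ℕ) := hkm
        omega
      set pos : Fin n := ⟨(k : ℕ) + 1, lt_trans hlt m.isLt⟩ with hpos
      set c := u' pos with hc
      have hcpos : u'.symm c = pos := Equiv.symm_apply_apply _ _
      -- c is in the same block as a and b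
      have hcblk : ((c : ℕ) < i) ↔ ((a : ℕ) < i) := by
        have h1 := hu'.1 pos
        have h2 := hu'symmlt a
        have h3 := hu'symmlt b
        rcases hcase with ⟨ha', hb'⟩ | ⟨ha', hb'⟩
        · constructor
          · intro _; exact ha'
          · intro _
            apply h1.1
            show (k : ℕ) + 1 < i
            have : (m : ℕ) < i := h3.2 hb'
            omega
        · constructor
          · intro hci
            exfalso
            have hki : ¬ (k : ℕ) < i := fun hh => absurd (h2.1 hh) (by omega)
            have : (pos : ℕ) < i := h1.2 (hc ▸ hci)
            simp only [hpos] at this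
            omega
          · intro h; omega
      have hblk1 : ((a : ℕ) < i ∧ (c : ℕ) < i) ∨ (i ≤ (a : ℕ) ∧ i ≤ (c : ℕ)) := by
        rcases hcase with ⟨ha', hb'⟩ | ⟨ha', hb'⟩
        · exact Or.inl ⟨ha', hcblk.2 ha'⟩
        · refine Or.inr ⟨ha', ?_⟩
          by_contra hh
          exact absurd (hcblk.1 (by omega)) (by omega)
      have hblk2 : ((c : ℕ) < i ∧ (b : ℕ) < i) ∨ (i ≤ (c : ℕ) ∧ i ≤ (b : ℕ)) := by
        rcases hblk1 with ⟨h1, h2⟩ | ⟨h1, h2⟩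
        · rcases hcase with ⟨_, hb'⟩ | ⟨ha', _⟩
          · exact Or.inl ⟨h2, hb'⟩
          · omega
        · rcases hcase with ⟨ha', _⟩ | ⟨_, hb'⟩
          · omega
          · exact Or.inr ⟨h2, hb'⟩
      have h1 : w'.symm a < w'.symm c := by
        apply (hu'.2 a c hblk1).1
        rw [← hk, hcpos]
        show (k : ℕ) < (k : ℕ) + 1
        omega
      have h2 : w'.symm c < w'.symm b := by
        apply (hu'.2 c b hblk2).1
        rw [hcpos, ← hm]
        show (k : ℕ) + 1 < (m : ℕ)
        exact hlt
      rw [hw'a] at h1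
      rw [hw'b] at h2
      have e1 : (j : ℕ) < (w'.symm c : ℕ) := h1
      have e2 : (w'.symm c : ℕ) < j + 1 := h2
      omega
    have hk2 : (k : ℕ) + 1 < n := by
      have := m.isLt; omega
    set s' := adjSwap n (k : ℕ) hk2 with hs'
    set kf : Fin n := ⟨(k : ℕ), Nat.lt_of_succ_lt hk2⟩ with hkf
    set k1f : Fin n := ⟨(k : ℕ) + 1, hk2⟩ with hk1f
    have hkfk : kf = k := Fin.ext rfl
    have hk1fm : k1f = m := Fin.ext (by rw [hmval])
    have hu'kf : u' kf = a := by rw [hkfk, hk, Equiv.apply_symm_apply]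
    have hu'k1f : u' k1f = b := by rw [hk1fm, hm, Equiv.apply_symm_apply]
    have hasc : u' kf < u' k1f := by rw [hu'kf, hu'k1f]; exact hab
    -- positions k and k+1 are in the same block
    have hkblk : ((k : ℕ) < i ∧ (k : ℕ) + 1 < i) ∨ (i ≤ (k : ℕ) ∧ i ≤ (k : ℕ) + 1) := by
      have h2 := hu'symmlt a
      have h3 := hu'symmlt b
      rcases hcase with ⟨ha', hb'⟩ | ⟨ha', hb'⟩
      · left
        refine ⟨h2.2 ha', ?_⟩
        rw [← hmval]
        exact h3.2 hb'
      · right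
        constructor
        · by_contra hh
          exact absurd (h2.1 (by omega)) (by omega)
        · omega
    have hu'symm_eq_a : ∀ x : Fin n, (u'.symm x : ℕ) = (k : ℕ) ↔ x = a := by
      intro x
      constructor
      · intro hx
        have : u'.symm x = k := Fin.ext hx
        have := congrArg u' this
        rwa [Equiv.apply_symm_apply, hk, Equiv.apply_symm_apply] at this
      · rintro rfl; rfl
    have hu'symm_eq_b : ∀ x : Fin n, (u'.symm x : ℕ) = (k : ℕ) + 1 ↔ x = b := by
      intro x
      constructor
      · intro hx
        have : u'.symm x = m := Fin.ext (by rw [hx, hmval])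
        have := congrArg u' this
        rwa [Equiv.apply_symm_apply, hm, Equiv.apply_symm_apply] at this
      · rintro rfl
        rw [← hm, hmval]
    -- u' * s' is a block sort of w
    have hbs : IsBlockSort i w (u' * s') := by
      constructor
      · intro p
        have hsp : ((s' p : ℕ) < i) ↔ ((p : ℕ) < i) := by
          rw [hs', adjSwap_val hk2]
          split_ifs <;> omega
        have := hu'.1 (s' p)
        show (p : ℕ) < i ↔ ((u' (s' p) : Fin n) : ℕ) < i
        rw [← this, hsp]
      · intro a' b' hbl
        have hsymm2 : ∀ x, (u' * s').symm x = s' (u'.symm x) := fun x =>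
          mul_adjSwap_symm hk2 u' x
        rw [hsymm2, hsymm2, hwsymm, hwsymm]
        have hsjf : s jf = j1f := by rw [hs]; exact adjSwap_apply_left hj
        have hsj1f : s j1f = jf := by rw [hs]; exact adjSwap_apply_right hj
        have hs'k : s' k = m := by
          rw [← hkfk, hs', adjSwap_apply_left hk2]
          exact Fin.ext hmval.symm
        have hs'm : s' m = k := by
          rw [← hk1fm, hs', adjSwap_apply_right hk2]
        by_cases hab1 : a' = a ∧ b' = b
        · obtain ⟨rfl, rfl⟩ := hab1
          rw [← hk, ← hm, hw'a, hw'b, hsjf, hsj1f, hs'k, hs'm]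
          apply iff_of_false
          · exact lt_asymm hkm
          · intro h
            have h' : j + 1 < j := h
            omega
        · by_cases hab2 : a' = b ∧ b' = a
          · obtain ⟨rfl, rfl⟩ := hab2
            rw [← hk, ← hm, hw'a, hw'b, hsjf, hsj1f, hs'k, hs'm]
            apply iff_of_true
            · exact hkm
            · show j < j + 1
              omega
          · have hmid := hu'.2 a' b' hbl
            have hl : (s' (u'.symm a') < s' (u'.symm b')) ↔ (u'.symm a' < u'.symm b') := by
              rw [hs']
              apply adjSwap_lt_iff hk2
              · rintro ⟨e1, e2⟩
                exact hab1 ⟨(hu'symm_eq_a a').1 e1, (hu'symm_eq_b b').1 e2⟩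
              · rintro ⟨e1, e2⟩
                exact hab2 ⟨(hu'symm_eq_b a').1 e1, (hu'symm_eq_a b').1 e2⟩
            have hr : (s (w'.symm a') < s (w'.symm b')) ↔ (w'.symm a' < w'.symm b') := by
              rw [hs]
              apply adjSwap_lt_iff hj
              · rintro ⟨e1, e2⟩
                exact hab1 ⟨(hw'symm_eq_a a').1 e1, (hw'symm_eq_b b').1 e2⟩
              · rintro ⟨e1, e2⟩
                exact hab2 ⟨(hw'symm_eq_b a').1 e1, (hw'symm_eq_a b').1 e2⟩
            rw [hl, hr]
            exact hmid
    have hueq : u = u' * s' := isBlockSort_unique hu hbs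
    have hinv : u'⁻¹ * u = s' := by rw [hueq, ← mul_assoc, inv_mul_cancel, one_mul]
    have hlen : invNum u = invNum u' + 1 := by
      rw [hueq, hs']
      exact invNum_mul_adjSwap hk2 u' hasc
    refine ⟨?_, hlen⟩
    rw [hinv, hs', invNum_adjSwap hk2, hlen]
  · -- mixed blocks: the projections agree
    left
    apply isBlockSort_unique hu'
    constructor
    · exact hu.1
    · intro a' b' hbl
      have h0 := hu.2 a' b' hbl
      rw [hwsymm, hwsymm] at h0
      rw [h0, hs]
      apply adjSwap_lt_iff hj
      · rintro ⟨e1, e2⟩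
        have ea : a' = a := (hw'symm_eq_a a').1 e1
        have eb : b' = b := (hw'symm_eq_b b').1 e2
        subst ea; subst eb
        exact hcase hbl
      · rintro ⟨e1, e2⟩
        have ea : a' = b := (hw'symm_eq_b a').1 e1
        have eb : b' = a := (hw'symm_eq_a b').1 e2
        subst ea; subst eb
        exact hcase (by tauto)
end
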